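/- arXiv:math/9312204 — 8 statements merged into one kernel-verified Lean document; each statement's English description precedes it below -/
import Mathlib

section
/- For a filter F on ω, the following are equivalent: (1) F has the Baire property as a subset of 2^ω; (2) F is a meager subset of 2^ω; (3) there exists a strictly increasing sequence n₀ < n₁ < n₂ < ⋯ of natural numbers such that for every X ∈ F, X ∩ [n_k, n_{k+1}) ≠ ∅ for all but finitely many k. -/
open Set Filter

/-- The characteristic function of a set, viewing `𝒫(α)` inside the Cantor space `α → Bool`. -/
noncomputable def chi {α : Type*} (X : Set α) : α → Bool :=
  fun n => @decide (n ∈ X) (Classical.propDecidable _)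

/-- A family of subsets of `α` viewed as a subset of the Cantor space `α → Bool`. -/
noncomputable def toCantor {α : Type*} (A : Set (Set α)) : Set (α → Bool) := chi '' A

/-- A family of subsets of `α` is meager if it is meager as a subset of the Cantor space. -/
def MeagerFamily {α : Type*} (A : Set (Set α)) : Prop := IsMeagre (toCantor A)

/-- A family of subsets of `α` has the Baire property if, viewed in the Cantor space,
it differs from an open set by a meager set. -/
def HasBP {α : Type*} (A : Set (Set α)) : Prop :=
  ∃ U : Set (α → Bool), IsOpen U ∧ IsMeagre (symmDiff (toCantor A) U)

/-- `A` has the Baire property relative to `C ⊆ 2^α`: the trace of `A` on `C` differs from a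
relatively open subset of `C` by a set meager in `C`. -/
def RelBP {α : Type*} (A : Set (Set α)) (C : Set (α → Bool)) : Prop :=
  ∃ O : Set C, IsOpen O ∧ IsMeagre (symmDiff (Subtype.val ⁻¹' (toCantor A)) O)

/-- Talagrand's strong Baire property: the filter has the Baire property relative to
every closed subset of the Cantor space. -/
def StrongBP {α : Type*} (F : Filter α) : Prop :=
  ∀ C : Set (α → Bool), IsClosed C → RelBP F.sets C

/-- `F⁺`: the sets whose complement is not in `F`, i.e. the sets compatible with `F`. -/
def Fplus {α : Type*} (F : Filter α) : Set (Set α) := {X | Xᶜ ∉ F}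

/-- `F` is completely meager if for every `X ∈ F⁺` the filter generated by `F ∪ {X}` is meager. -/
def CompletelyMeager {α : Type*} (F : Filter α) : Prop :=
  ∀ X ∈ Fplus F, MeagerFamily (F ⊓ 𝓟 X).sets

/-- `F` is weakly hereditarily meager if for every `f`, either some fiber `f⁻¹(i)` is
compatible with `F`, or the image filter `f(F)` is meager. -/
def WeaklyHereditarilyMeager {α : Type*} (F : Filter α) : Prop :=
  ∀ f : α → ℕ, (∃ i : ℕ, f ⁻¹' {i} ∈ Fplus F) ∨ MeagerFamily (Filter.map f F).sets

/-- `F` is hereditarily meager if for every `f`, the image filter `f(F)` either contains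
a finite set (is improper) or is meager. -/
def HereditarilyMeager {α : Type*} (F : Filter α) : Prop :=
  ∀ f : α → ℕ, (∃ Y ∈ Filter.map f F, Y.Finite) ∨ MeagerFamily (Filter.map f F).sets

/-- `F` is a P⁺-filter: every ⊆*-decreasing sequence from `F⁺` has a pseudo-intersection in `F⁺`. -/
def PPlusFilter {α : Type*} (F : Filter α) : Prop :=
  ∀ X : ℕ → Set α, (∀ n, X n ∈ Fplus F) → (∀ n, (X (n + 1) \ X n).Finite) →
    ∃ Y ∈ Fplus F, ∀ n, (Y \ X n).Finite

/-- `F` is a strong P⁺-filter: for every sequence from `F⁺` there is `f : ω → ω` such that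
every `Y ∈ F` meets `Xₙ ∩ [0, f(n))` for all but finitely many `n`. -/
def StrongPPlusFilter (F : Filter ℕ) : Prop :=
  ∀ X : ℕ → Set ℕ, (∀ n, X n ∈ Fplus F) →
    ∃ f : ℕ → ℕ, ∀ Y ∈ F, ∀ᶠ n in Filter.atTop, (Y ∩ X n ∩ Set.Iio (f n)).Nonempty

/-- `F` is an Fσ filter: as a subset of Cantor space it is a countable union of closed sets. -/
def IsFsigmaFilter (F : Filter ℕ) : Prop :=
  ∃ C : ℕ → Set (ℕ → Bool), (∀ n, IsClosed (C n)) ∧ toCantor F.sets = ⋃ n, C n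

/-- An almost disjoint family: an infinite family of infinite sets with pairwise finite
intersections. -/
def ADFamily (𝒜 : Set (Set ℕ)) : Prop :=
  𝒜.Infinite ∧ (∀ A ∈ 𝒜, A.Infinite) ∧
    ∀ A ∈ 𝒜, ∀ B ∈ 𝒜, A ≠ B → (A ∩ B).Finite

/-- A maximal almost disjoint family. -/
def MadFamily (𝒜 : Set (Set ℕ)) : Prop :=
  ADFamily 𝒜 ∧ ∀ X : Set ℕ, X.Infinite → ∃ A ∈ 𝒜, (X ∩ A).Infinite

/-- `F(𝒜)`: the filter generated by the complements of members of `𝒜` and the cofinite sets. -/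
def madFilter (𝒜 : Set (Set ℕ)) : Filter ℕ :=
  Filter.cofinite ⊓ ⨅ A ∈ 𝒜, 𝓟 Aᶜ

/-- `I(𝒜)`: the ideal generated by `𝒜`, i.e. sets covered by finitely many members of `𝒜`
together with a finite set. -/
def madIdeal (𝒜 : Set (Set ℕ)) : Set (Set ℕ) :=
  {X | ∃ s : Finset (Set ℕ), ↑s ⊆ 𝒜 ∧ (X \ ⋃ A ∈ s, (A : Set ℕ)).Finite}

/-- The Fubini product `F ⊗ G` of two filters. -/
def tensor {α β : Type*} (F : Filter α) (G : Filter β) : Filter (α × β) where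
  sets := {X | {n | {m | (n, m) ∈ X} ∈ G} ∈ F}
  univ_sets := by simp
  sets_of_superset := by
    intro X Y hX hXY
    simp only [Set.mem_setOf_eq] at *
    filter_upwards [hX] with n hn
    filter_upwards [hn] with m hm
    exact hXY hm
  inter_sets := by
    intro X Y hX hY
    simp only [Set.mem_setOf_eq] at *
    filter_upwards [hX, hY] with n h1 h2
    filter_upwards [h1, h2] with m hm1 hm2
    exact ⟨hm1, hm2⟩

/-- A dominating family of functions. -/
def Dominating (D : Set (ℕ → ℕ)) : Prop :=
  ∀ g : ℕ → ℕ, ∃ f ∈ D, ∀ᶠ n in Filter.atTop, g n ≤ f n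

/-- The dominating number `𝔡`. -/
noncomputable def frakD : Cardinal :=
  sInf {c : Cardinal | ∃ D : Set (ℕ → ℕ), Dominating D ∧ Cardinal.mk D = c}

section TalagrandAux

abbrev P := ℕ → Bool

lemma chi_apply {α : Type*} (X : Set α) (n : α) : chi X n = true ↔ n ∈ X := by
  simp [chi]

lemma chi_set_eq (y : P) : chi {i | y i = true} = y := by
  funext i
  by_cases h : y i = true
  · rw [(chi_apply _ i).mpr h, h]
  · simp only [Bool.not_eq_true] at h
    rw [h]
    simp [chi, h]

lemma mem_toCantor {A : Set (Set ℕ)} {x : P} :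
    x ∈ toCantor A ↔ {n | x n = true} ∈ A := by
  constructor
  · rintro ⟨X, hX, rfl⟩
    have : {n | chi X n = true} = X := by ext n; exact chi_apply X n
    rwa [this]
  · intro h
    exact ⟨_, h, chi_set_eq x⟩

/-- basic clopen boxes inside open sets -/
lemma exists_finset_box {U : Set P} {x : P} (hU : IsOpen U) (hx : x ∈ U) :
    ∃ I : Finset ℕ, ∀ y : P, (∀ i ∈ I, y i = x i) → y ∈ U := by
  have h : U ∈ nhds x := hU.mem_nhds hx
  rw [nhds_pi, Filter.mem_pi'] at h
  obtain ⟨I, t, ht, hsub⟩ := h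
  refine ⟨I, fun y hy => hsub fun i hi => ?_⟩
  rw [hy i hi]
  exact mem_of_mem_nhds (ht i)

lemma isOpen_agree (I : Finset ℕ) (x : P) : IsOpen {y : P | ∀ i ∈ I, y i = x i} := by
  have : {y : P | ∀ i ∈ I, y i = x i} = ⋂ i ∈ I, (fun y : P => y i) ⁻¹' {x i} := by
    ext y; simp
  rw [this]
  exact isOpen_biInter_finset fun i _ => (continuous_apply i).isOpen_preimage _ (isOpen_discrete _)

lemma open_nonempty_not_meagre {U : Set P} (hU : IsOpen U) (hne : U.Nonempty) :
    ¬ IsMeagre U := by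
  intro h
  obtain ⟨x, hx⟩ := hne
  have hd : Dense Uᶜ := dense_of_mem_residual h
  obtain ⟨y, hyU, hyc⟩ := hd.inter_open_nonempty U hU ⟨x, hx⟩
  exact hyc hyU

lemma IsMeagre.union' {s t : Set P} (hs : IsMeagre s) (ht : IsMeagre t) :
    IsMeagre (s ∪ t) := by
  rw [IsMeagre, Set.compl_union]
  exact Filter.inter_mem hs ht

/-- xor with a fixed vector is a homeomorphism; meager sets map to meager sets. -/
def xorV (v : P) : P → P := fun y i => xor (y i) (v i)

lemma xorV_invol (v : P) (y : P) : xorV v (xorV v y) = y := by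
  funext i
  simp [xorV, Bool.xor_assoc]

lemma xorV_continuous (v : P) : Continuous (xorV v) :=
  continuous_pi fun i =>
    (continuous_of_discreteTopology (f := fun b : Bool => xor b (v i))).comp (continuous_apply i)

noncomputable def xorH (v : P) : P ≃ₜ P where
  toFun := xorV v
  invFun := xorV v
  left_inv := xorV_invol v
  right_inv := xorV_invol v
  continuous_toFun := xorV_continuous v
  continuous_invFun := xorV_continuous v

lemma isNowhereDense_image (e : P ≃ₜ P) {t : Set P} (ht : IsNowhereDense t) :
    IsNowhereDense (e '' t) := by
  rw [IsNowhereDense, ← e.image_closure, ← e.image_interior, ht, Set.image_empty]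

lemma isMeagre_image (e : P ≃ₜ P) {s : Set P} (hs : IsMeagre s) : IsMeagre (e '' s) := by
  rw [isMeagre_iff_countable_union_isNowhereDense] at hs ⊢
  obtain ⟨S, hnd, hc, hsub⟩ := hs
  refine ⟨(Set.image e) '' S, ?_, hc.image _, ?_⟩
  · rintro _ ⟨t, ht, rfl⟩
    exact isNowhereDense_image e (hnd t ht)
  · intro x hx
    obtain ⟨y, hy, rfl⟩ := hx
    obtain ⟨t, ht, hyt⟩ := hsub hy
    exact ⟨e '' t, ⟨t, ht, rfl⟩, ⟨y, hyt, rfl⟩⟩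

lemma lemmaA (F : Filter ℕ) (hF : Filter.cofinite ≤ F) (h : HasBP F.sets) :
    MeagerFamily F.sets := by
  obtain ⟨U, hU, hM⟩ := h
  set A := toCantor F.sets with hA
  set M := symmDiff A U with hMdef
  by_contra hnm
  -- U is nonempty
  have hUne : U.Nonempty := by
    rcases Set.eq_empty_or_nonempty U with h0 | h
    · exfalso
      refine hnm (hM.mono ?_)
      intro y hy
      show y ∈ M
      rw [hMdef, h0]
      simpa [symmDiff] using hy
    · exact h
  obtain ⟨x, hx⟩ := hUne
  obtain ⟨I, hI⟩ := exists_finset_box hU hx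
  set B : Set P := {y | ∀ i ∈ I, y i = x i} with hBdef
  set B₁ : Set P := {y : P | ∀ i ∈ I, y i = true} with hB1def
  set v₁ : P := fun i => if i ∈ I then xor (x i) true else false with hv1
  set w : P := fun i => if i ∈ I then false else true with hw
  set e₁ := xorV v₁ with he1
  set g := xorV w with hg
  have he₁B : ∀ y ∈ B, e₁ y ∈ B₁ := by
    intro y hy i hi
    simp only [he1, xorV, hv1, if_pos hi, hy i hi]
    cases x i <;> rfl
  have he₁off : ∀ (y : P) (i : ℕ), i ∉ I → e₁ y i = y i := by
    intro y i hi
    simp [he1, xorV, hv1, hi]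
  have he₁on : ∀ (y : P) (i : ℕ), i ∈ I → e₁ y i = xor (y i) (xor (x i) true) := by
    intro y i hi
    simp [he1, xorV, hv1, hi]
  -- S := B \ M ⊆ A ∩ U, and e₁ '' S ⊆ A ∩ B₁
  set S : Set P := B \ M with hS
  have hSA : S ⊆ A := by
    rintro y ⟨hyB, hyM⟩
    have hyU : y ∈ U := hI y hyB
    by_contra hyA
    exact hyM (Or.inr ⟨hyU, hyA⟩)
  have he₁S_A : ∀ y ∈ S, e₁ y ∈ A := by
    intro y hy
    have hyA : y ∈ A := hSA hy
    rw [hA, mem_toCantor] at hyA ⊢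
    have hsub : {n | y n = true} ⊆ {n | e₁ y n = true} := by
      intro n hn
      by_cases hnI : n ∈ I
      · exact he₁B y hy.1 n hnI
      · simpa [he₁off y n hnI] using hn
    exact F.sets_of_superset hyA hsub
  -- inversion facts
  have he₁inv : ∀ z : P, e₁ (e₁ z) = z := xorV_invol v₁
  have hginv : ∀ z : P, g (g z) = z := xorV_invol w
  have hgB₁ : ∀ z ∈ B₁, g z ∈ B₁ := by
    intro z hz i hi
    simp [hg, xorV, hw, hi, hz i hi]
  have hgoff : ∀ (z : P) (i : ℕ), i ∉ I → g z i = !(z i) := by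
    intro z i hi
    simp [hg, xorV, hw, hi]
  have he₁back : ∀ z ∈ B₁, e₁ z ∈ B := by
    intro z hz i hi
    rw [he₁on z i hi, hz i hi]
    cases x i <;> rfl
  have hcompl : ∀ z ∈ B₁, z ∉ e₁ '' S → z ∈ e₁ '' (B ∩ M) := by
    intro z hz hzS
    refine ⟨e₁ z, ⟨he₁back z hz, ?_⟩, he₁inv z⟩
    by_contra hM'
    exact hzS ⟨e₁ z, ⟨he₁back z hz, hM'⟩, he₁inv z⟩
  -- the meager residue
  have hm1 : IsMeagre (e₁ '' (B ∩ M)) := isMeagre_image (xorH v₁) (hM.mono Set.inter_subset_right)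
  have hm2 : IsMeagre (g '' (e₁ '' (B ∩ M))) := isMeagre_image (xorH w) hm1
  set T : Set P := (e₁ '' S) ∩ (g ⁻¹' (e₁ '' S)) with hT
  have hB₁cov : B₁ ⊆ T ∪ (e₁ '' (B ∩ M) ∪ g '' (e₁ '' (B ∩ M))) := by
    intro z hz
    by_cases h1 : z ∈ e₁ '' S
    · by_cases h2 : g z ∈ e₁ '' S
      · exact Or.inl ⟨h1, h2⟩
      · refine Or.inr (Or.inr ?_)
        have := hcompl (g z) (hgB₁ z hz) h2
        exact ⟨g z, this, hginv z⟩
    · exact Or.inr (Or.inl (hcompl z hz h1))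
  have hB₁open : IsOpen B₁ := by
    have := isOpen_agree I (fun _ => true)
    simpa using this
  have hB₁ne : B₁.Nonempty := ⟨fun _ => true, fun i _ => rfl⟩
  have hTne : T.Nonempty := by
    by_contra hTe
    rw [Set.not_nonempty_iff_eq_empty] at hTe
    apply open_nonempty_not_meagre hB₁open hB₁ne
    refine (hm1.union' hm2).mono ?_
    intro z hz
    rcases hB₁cov hz with h | h
    · rw [hTe] at h; exact absurd h (Set.notMem_empty z)
    · exact h
  obtain ⟨z, hz1, hz2⟩ := hTne
  have hzA : z ∈ A := by
    obtain ⟨y, hy, rfl⟩ := hz1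
    exact he₁S_A y hy
  have hgzA : g z ∈ A := by
    obtain ⟨y, hy, heq⟩ := hz2
    rw [← heq]
    exact he₁S_A y hy
  rw [hA, mem_toCantor] at hzA hgzA
  have hXY : {n | z n = true} ∩ {n | g z n = true} ∈ F := F.inter_sets hzA hgzA
  have hsubI : {n | z n = true} ∩ {n | g z n = true} ⊆ ↑I := by
    rintro n ⟨hn1, hn2⟩
    by_contra hnI
    rw [Set.mem_setOf_eq, hgoff z n hnI, hn1] at hn2
    simp at hn2
  have hcof : ({n | z n = true} ∩ {n | g z n = true})ᶜ.Finite := by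
    have := hF hXY
    rwa [Filter.mem_cofinite] at this
  have hfin : ({n | z n = true} ∩ {n | g z n = true}).Finite :=
    (I.finite_toSet).subset hsubI
  have : (Set.univ : Set ℕ).Finite := by
    rw [← Set.union_compl_self ({n | z n = true} ∩ {n | g z n = true})]
    exact hfin.union hcof
  exact Set.infinite_univ this

lemma step_lemma (E : Set P) (hE : IsOpen E) (hd : Dense E) (m : ℕ) :
    ∃ m', m < m' ∧ ∀ y : P, ∃ z : P, (∀ i, i < m → z i = y i) ∧
      ∀ w : P, (∀ i, i < m' → w i = z i) → w ∈ E := by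
  have aux : ∀ σ : Fin m → Bool, ∃ b : ℕ, ∃ z : P,
      (∀ i, ∀ h : i < m, z i = σ ⟨i, h⟩) ∧ ∀ w : P, (∀ i, i < b → w i = z i) → w ∈ E := by
    intro σ
    set yσ : P := fun i => if h : i < m then σ ⟨i, h⟩ else false with hyσ
    have hCopen : IsOpen {w : P | ∀ i ∈ Finset.range m, w i = yσ i} := isOpen_agree _ _
    have hCne : ({w : P | ∀ i ∈ Finset.range m, w i = yσ i}).Nonempty := ⟨yσ, fun i _ => rfl⟩
    obtain ⟨z, hzC, hzE⟩ := hd.inter_open_nonempty _ hCopen hCne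
    obtain ⟨J, hJ⟩ := exists_finset_box hE hzE
    refine ⟨J.sup id + 1, z, ?_, ?_⟩
    · intro i h
      have := hzC i (Finset.mem_range.mpr h)
      rw [this, hyσ]
      simp [h]
    · intro w hw
      refine hJ w fun i hi => hw i ?_
      exact Nat.lt_succ_of_le (Finset.le_sup (f := id) hi)
  choose b z hz1 hz2 using aux
  classical
  refine ⟨max (m + 1) (Finset.univ.sup b), by omega, fun y => ?_⟩
  set σ : Fin m → Bool := fun i => y i with hσ
  refine ⟨z σ, fun i h => hz1 σ i h, fun w hw => ?_⟩
  refine hz2 σ w fun i hi => hw i ?_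
  calc i < b σ := hi
    _ ≤ Finset.univ.sup b := Finset.le_sup (Finset.mem_univ σ)
    _ ≤ _ := le_max_right _ _

lemma lemmaB (F : Filter ℕ) (h : MeagerFamily F.sets) :
    ∃ n : ℕ → ℕ, StrictMono n ∧
      ∀ X ∈ F, ∀ᶠ k in Filter.atTop, (X ∩ Set.Ico (n k) (n (k + 1))).Nonempty := by
  classical
  set A := toCantor F.sets with hA
  -- get a sequence of open dense sets whose intersection misses A
  obtain ⟨S, hSo, hSd, hSc, hSsub⟩ := mem_residual_iff.mp h
  have hne : (insert Set.univ S).Nonempty := ⟨_, Set.mem_insert _ _⟩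
  obtain ⟨D, hD⟩ := (hSc.insert Set.univ).exists_eq_range hne
  have hDo : ∀ k, IsOpen (D k) := by
    intro k
    have : D k ∈ insert Set.univ S := hD ▸ Set.mem_range_self k
    rcases this with h' | h'
    · rw [h']; exact isOpen_univ
    · exact hSo _ h'
  have hDd : ∀ k, Dense (D k) := by
    intro k
    have : D k ∈ insert Set.univ S := hD ▸ Set.mem_range_self k
    rcases this with h' | h'
    · rw [h']; exact dense_univ
    · exact hSd _ h'
  have hDsub : (⋂ k, D k) ⊆ Aᶜ := by
    refine Set.Subset.trans ?_ hSsub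
    intro x hx
    intro t ht
    have : t ∈ insert Set.univ S := Set.mem_insert_of_mem _ ht
    rw [hD] at this
    obtain ⟨k, rfl⟩ := this
    exact Set.mem_iInter.mp hx k
  -- increasing open dense sets
  set E : ℕ → Set P := fun k => ⋂ i ∈ Finset.range (k + 1), D i with hE
  have hEo : ∀ k, IsOpen (E k) := fun k =>
    isOpen_biInter_finset fun i _ => hDo i
  have hEd : ∀ k, Dense (E k) := by
    intro k
    induction k with
    | zero => simpa [hE] using hDd 0
    | succ k ih =>
      have : E (k + 1) = D (k + 1) ∩ E k := by
        rw [hE]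
        simp only []
        rw [Finset.range_add_one, Finset.set_biInter_insert]
      rw [this]
      exact Dense.inter_of_isOpen_left (hDd (k + 1)) ih (hDo (k + 1))
  have hEanti : ∀ j k, j ≤ k → E k ⊆ E j := by
    intro j k hjk x hx
    simp only [hE, Set.mem_iInter, Finset.mem_range] at hx ⊢
    intro i hi
    exact hx i (by omega)
  have hED : ∀ k, E k ⊆ D k := fun k =>
    Set.biInter_subset_of_mem (Finset.mem_range.mpr (Nat.lt_succ_self k))
  -- the recursion giving interval endpoints
  choose H hlt hspec using fun k m => step_lemma (E k) (hEo k) (hEd k) m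
  set n : ℕ → ℕ := fun k => Nat.rec 0 (fun k ih => H k ih) k with hn
  have hn0 : n 0 = 0 := rfl
  have hnsucc : ∀ k, n (k + 1) = H k (n k) := fun k => rfl
  have hmono : StrictMono n := strictMono_nat_of_lt_succ fun k => by
    rw [hnsucc]; exact hlt k (n k)
  refine ⟨n, hmono, ?_⟩
  intro X hX
  by_contra hbad
  rw [Filter.not_eventually] at hbad
  -- choose the escaping extensions
  choose Z hZ1 hZ2 using fun k (y : P) => hspec k (n k) y
  set bad : ℕ → Prop := fun k => ¬(X ∩ Set.Ico (n k) (n (k + 1))).Nonempty with hbaddef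
  set t : ℕ → P := fun k => Nat.rec (motive := fun _ => P) (fun _ => true)
    (fun k ih => fun i => if i < n (k + 1) then
      (if bad k then Z k ih i else (if i < n k then ih i else true)) else true) k with ht
  have htsucc : ∀ k i, t (k + 1) i = if i < n (k + 1) then
      (if bad k then Z k (t k) i else (if i < n k then t k i else true)) else true :=
    fun k i => rfl
  have hagree : ∀ k i, i < n k → t (k + 1) i = t k i := by
    intro k i hi
    have hi' : i < n (k + 1) := hi.trans (hmono (Nat.lt_succ_self k))
    rw [htsucc, if_pos hi']
    by_cases hb : bad k
    · rw [if_pos hb]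
      exact hZ1 k (t k) i hi
    · rw [if_neg hb, if_pos hi]
  have hstab : ∀ k k', k ≤ k' → ∀ i, i < n k → t k' i = t k i := by
    intro k k' hkk'
    induction k' with
    | zero =>
      intro i hi
      have : k = 0 := Nat.le_zero.mp hkk'
      rw [this]
    | succ k' ih =>
      intro i hi
      rcases Nat.lt_or_ge k (k' + 1) with h' | h'
      · have hk' : k ≤ k' := Nat.lt_succ_iff.mp h'
        rw [hagree k' i (hi.trans_le (hmono.le_iff_le.mpr hk'))]
        exact ih hk' i hi
      · have : k = k' + 1 := le_antisymm hkk' h'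
        rw [this]
  set y : P := fun i => t (i + 1) i with hy
  have hyk : ∀ k i, i < n k → y i = t k i := by
    intro k i hi
    rcases le_or_gt k (i + 1) with h' | h'
    · exact hstab k (i + 1) h' i hi
    · have hi2 : i < n (i + 1) := lt_of_lt_of_le (Nat.lt_succ_self i) (hmono.le_apply)
      exact (hstab (i + 1) k h'.le i hi2).symm
  -- every i lies in a unique interval
  have hfind : ∀ i, ∃ k, n k ≤ i ∧ i < n (k + 1) := by
    intro i
    set k := Nat.findGreatest (fun k => n k ≤ i) i with hk
    have h0 : n 0 ≤ i := by rw [hn0]; exact Nat.zero_le i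
    have hki : n k ≤ i :=
      Nat.findGreatest_spec (P := fun k => n k ≤ i) (Nat.zero_le i) h0
    refine ⟨k, hki, ?_⟩
    by_contra hc
    push_neg at hc
    have := Nat.findGreatest_is_greatest (P := fun k => n k ≤ i) (n := i)
      (hk ▸ Nat.lt_succ_self k) (by
      calc k + 1 ≤ n (k + 1) := hmono.le_apply
        _ ≤ i := hc)
    exact this hc
  -- y extends X
  have hXY : X ⊆ {i | y i = true} := by
    intro i hiX
    obtain ⟨k, hk1, hk2⟩ := hfind i
    have : y i = t (k + 1) i := hyk (k + 1) i hk2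
    rw [Set.mem_setOf_eq, this, htsucc, if_pos hk2]
    by_cases hb : bad k
    · exfalso
      exact hb ⟨i, hiX, hk1, hk2⟩
    · rw [if_neg hb, if_neg (not_lt.mpr hk1)]
  -- for bad k, y escapes E k
  have hyE : ∀ k, bad k → y ∈ E k := by
    intro k hb
    refine hZ2 k (t k) y fun i hi => ?_
    rw [hyk (k + 1) i hi, htsucc, if_pos hi, if_pos hb]
  have hyall : ∀ j, y ∈ D j := by
    intro j
    obtain ⟨k, hjk, hk⟩ := (Filter.frequently_atTop.mp hbad) j
    exact hED j (hEanti j k hjk (hyE k hk))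
  have hyAc : y ∈ Aᶜ := hDsub (Set.mem_iInter.mpr hyall)
  have hYF : {i | y i = true} ∈ F := F.sets_of_superset hX hXY
  exact hyAc (mem_toCantor.mpr hYF)

lemma lemmaC (F : Filter ℕ)
    (h : ∃ n : ℕ → ℕ, StrictMono n ∧
      ∀ X ∈ F, ∀ᶠ k in Filter.atTop, (X ∩ Set.Ico (n k) (n (k + 1))).Nonempty) :
    MeagerFamily F.sets := by
  obtain ⟨n, hmono, hhits⟩ := h
  set M : ℕ → Set P := fun m =>
    {x : P | ∀ k, m ≤ k → ∃ i ∈ Set.Ico (n k) (n (k + 1)), x i = true} with hM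
  have hMclosed : ∀ m, IsClosed (M m) := by
    intro m
    have heq : M m = ⋂ k ∈ {k : ℕ | m ≤ k},
        ⋃ i ∈ Finset.Ico (n k) (n (k + 1)), {x : P | x i = true} := by
      ext x
      simp only [hM, Set.mem_setOf_eq, Set.mem_iInter, Set.mem_iUnion, Finset.mem_Ico,
        Set.mem_Ico, Set.mem_setOf_eq]
      constructor
      · intro hx k hk
        obtain ⟨i, h1, h2⟩ := hx k hk
        exact ⟨i, h1, h2⟩
      · intro hx k hk
        obtain ⟨i, h1, h2⟩ := hx k hk
        exact ⟨i, h1, h2⟩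
    rw [heq]
    refine isClosed_biInter fun k _ => ?_
    refine Set.Finite.isClosed_biUnion (Finset.finite_toSet _) fun i _ => ?_
    have : {x : P | x i = true} = (fun x : P => x i) ⁻¹' {true} := rfl
    rw [this]
    exact (isClosed_discrete _).preimage (continuous_apply i)
  have hMnd : ∀ m, IsNowhereDense (M m) := by
    intro m
    rw [(hMclosed m).isNowhereDense_iff]
    by_contra hne
    obtain ⟨x, hx⟩ := Set.nonempty_iff_ne_empty.mpr hne
    obtain ⟨I, hI⟩ := exists_finset_box isOpen_interior hx
    set k := m + I.sup id + 1 with hk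
    set y : P := fun i => if i ∈ I then x i else false with hy
    have hyM : y ∈ M m := interior_subset (hI y fun i hi => by rw [hy]; simp [hi])
    obtain ⟨i, hi1, hi2⟩ := hyM k (by omega)
    have hik : ¬ i ∈ I := by
      intro hiI
      have h1 : i ≤ I.sup id := Finset.le_sup (f := id) hiI
      have h2 : k ≤ n k := hmono.le_apply
      have := hi1.1
      omega
    rw [hy] at hi2
    simp [hik] at hi2
  have hcov : toCantor F.sets ⊆ ⋃ m, M m := by
    rintro _ ⟨X, hX, rfl⟩
    obtain ⟨m, hm⟩ := Filter.eventually_atTop.mp (hhits X hX)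
    refine Set.mem_iUnion.mpr ⟨m, fun k hk => ?_⟩
    obtain ⟨i, hiX, hiI⟩ := hm k hk
    exact ⟨i, hiI, (chi_apply X i).mpr hiX⟩
  have hMm : ∀ m, IsMeagre (M m) := by
    intro m
    rw [isMeagre_iff_countable_union_isNowhereDense]
    exact ⟨{M m}, by simpa using hMnd m, Set.countable_singleton _, by simp⟩
  exact (isMeagre_iUnion hMm).mono hcov

end TalagrandAux

/-- Talagrand's characterization of meager filters: for a filter `F` on `ω` (containing all
cofinite sets), having the Baire property, being meager, and the interval-hitting condition
are all equivalent. -/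


theorem stmt0 (F : Filter ℕ) (hF : Filter.cofinite ≤ F) :
    List.TFAE [HasBP F.sets,
      MeagerFamily F.sets,
      ∃ n : ℕ → ℕ, StrictMono n ∧
        ∀ X ∈ F, ∀ᶠ k in Filter.atTop, (X ∩ Set.Ico (n k) (n (k + 1))).Nonempty] := by
  tfae_have 1 → 2 := lemmaA F hF
  tfae_have 2 → 1 := by
    intro h
    refine ⟨∅, isOpen_empty, ?_⟩
    have he : symmDiff (toCantor F.sets) (∅ : Set (ℕ → Bool)) = toCantor F.sets := by
      simp [symmDiff_def]
    rw [he]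
    exact h
  tfae_have 2 → 3 := lemmaB F
  tfae_have 3 → 2 := lemmaC F
  tfae_finish
end

section
/- For a filter F on ω, the following are equivalent: (1) F is weakly hereditarily meager; (2) for each sequence ⟨X_i : i ∈ ω⟩ of subsets of ω such that ⋃_i X_i ∈ F and ω∖X_i ∈ F for every i, there exists a strictly increasing sequence n₀ < n₁ < ⋯ such that for every Y ∈ F and all but finitely many k, Y ∩ ⋃_{i ∈ [n_k, n_{k+1})} X_i ≠ ∅. -/
open Set Filter

/-! ### Auxiliary lemmas for Talagrand's characterization of meager filters -/

section Talagrand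

open Set Filter

lemma chi_eq_true_iff {X : Set ℕ} {i : ℕ} : chi X i = true ↔ i ∈ X := by
  simp [chi]

/-- Basic cylinder: functions agreeing with `σ` below `m`. -/
def cyl (σ : ℕ → Bool) (m : ℕ) : Set (ℕ → Bool) := {g | ∀ i < m, g i = σ i}

lemma self_mem_cyl (σ : ℕ → Bool) (m : ℕ) : σ ∈ cyl σ m := fun _ _ => rfl

lemma cyl_anti {σ : ℕ → Bool} {m m' : ℕ} (h : m ≤ m') : cyl σ m' ⊆ cyl σ m :=
  fun _ hg i hi => hg i (lt_of_lt_of_le hi h)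

lemma isOpen_cyl (σ : ℕ → Bool) (m : ℕ) : IsOpen (cyl σ m) := by
  have : cyl σ m = ⋂ i ∈ Finset.range m, (fun g : ℕ → Bool => g i) ⁻¹' {σ i} := by
    ext g; simp [cyl]
  rw [this]
  exact isOpen_biInter_finset fun i _ =>
    (continuous_apply i).isOpen_preimage _ (isOpen_discrete _)

lemma exists_cyl_subset {U : Set (ℕ → Bool)} (hU : IsOpen U) {x : ℕ → Bool} (hx : x ∈ U) :
    ∃ m, cyl x m ⊆ U := by
  rw [isOpen_pi_iff] at hU
  obtain ⟨I, u, hI, hsub⟩ := hU x hx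
  refine ⟨(I.sup id) + 1, fun g hg => hsub ?_⟩
  intro i hi
  have hgi : g i = x i := hg i (Nat.lt_succ_of_le (Finset.le_sup (f := id) hi))
  rw [hgi]; exact (hI i hi).2

lemma escape_cyl {M : Set (ℕ → Bool)} (hM : IsClosed M) (hnd : interior M = ∅)
    (σ : ℕ → Bool) (N : ℕ) :
    ∃ m τ, N < m ∧ (∀ i < N, τ i = σ i) ∧ ∀ g ∈ cyl τ m, g ∉ M := by
  have hdense : Dense Mᶜ := by rwa [← interior_eq_empty_iff_dense_compl]
  obtain ⟨x, hx1, hx2⟩ :=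
    hdense.inter_open_nonempty (cyl σ N) (isOpen_cyl σ N) ⟨σ, self_mem_cyl σ N⟩
  obtain ⟨m, hm⟩ := exists_cyl_subset hM.isOpen_compl hx2
  refine ⟨max (N + 1) m, x, lt_of_lt_of_le (Nat.lt_succ_self N) (le_max_left _ _),
    fun i hi => hx1 i hi, fun g hg => hm (cyl_anti (le_max_right _ _) hg)⟩

lemma escape_all {M : Set (ℕ → Bool)} (hM : IsClosed M) (hnd : interior M = ∅) (N : ℕ) :
    ∃ m, N < m ∧ ∀ σ : ℕ → Bool, ∃ τ : ℕ → Bool,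
      (∀ i < N, τ i = σ i) ∧ ∀ g ∈ cyl τ m, g ∉ M := by
  classical
  have h : ∀ s : Fin N → Bool, ∃ m τ, N < m ∧
      (∀ i < N, τ i = (fun j => if hj : j < N then s ⟨j, hj⟩ else false) i) ∧
      ∀ g ∈ cyl τ m, g ∉ M :=
    fun s => escape_cyl hM hnd _ N
  choose mf τf h1 h2 h3 using h
  refine ⟨Finset.univ.sup mf, lt_of_lt_of_le (h1 fun _ => false)
    (Finset.le_sup (Finset.mem_univ _)), fun σ => ?_⟩
  set s : Fin N → Bool := fun i => σ i with hs
  refine ⟨τf s, fun i hi => ?_, fun g hg => h3 s g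
    (cyl_anti (Finset.le_sup (Finset.mem_univ s)) hg)⟩
  rw [h2 s i hi]
  simp only [hs, dif_pos hi]

lemma isNowhereDense_isMeagre {X : Type*} [TopologicalSpace X] {t : Set X}
    (h : IsNowhereDense t) : IsMeagre t :=
  isMeagre_iff_countable_union_isNowhereDense.2
    ⟨{t}, by simpa using h, Set.countable_singleton t, by simp⟩

lemma interior_union_empty {X : Type*} [TopologicalSpace X] {A B : Set X} (hA : IsClosed A)
    (hiA : interior A = ∅) (hiB : interior B = ∅) : interior (A ∪ B) = ∅ := by
  have h1 : interior (A ∪ B) ∩ Aᶜ ⊆ interior B := by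
    apply interior_maximal
    · rintro x ⟨hx1, hx2⟩
      rcases interior_subset hx1 with h | h
      · exact absurd h hx2
      · exact h
    · exact isOpen_interior.inter hA.isOpen_compl
  rw [hiB, Set.subset_empty_iff, ← Set.disjoint_iff_inter_eq_empty,
    Set.disjoint_compl_right_iff_subset] at h1
  have h2 : interior (A ∪ B) ⊆ interior A := interior_maximal h1 isOpen_interior
  rw [hiA, Set.subset_empty_iff] at h2
  exact h2

/-- Easy direction of Talagrand's theorem: if there is an interval partition each member of `G`
meets cofinitely often, then `G` is a meager family. -/
lemma meager_of_partition (G : Filter ℕ) (n : ℕ → ℕ) (hn : StrictMono n)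
    (h : ∀ Z ∈ G, ∀ᶠ k in Filter.atTop, (Z ∩ Set.Ico (n k) (n (k + 1))).Nonempty) :
    MeagerFamily G.sets := by
  classical
  set A : ℕ → Set (ℕ → Bool) :=
    fun K => {g | ∀ k, K ≤ k → ∃ i, n k ≤ i ∧ i < n (k + 1) ∧ g i = true} with hA
  have hclosed : ∀ K, IsClosed (A K) := by
    intro K
    have : A K = ⋂ k, ⋂ (_ : K ≤ k),
        ⋃ i ∈ Finset.Ico (n k) (n (k + 1)), (fun g : ℕ → Bool => g i) ⁻¹' {true} := by
      ext g
      simp only [hA, Set.mem_setOf_eq, Set.mem_iInter, Set.mem_iUnion, Finset.mem_Ico,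
        Set.mem_preimage, Set.mem_singleton_iff]
      constructor
      · intro hg k hk; obtain ⟨i, h1, h2, h3⟩ := hg k hk; exact ⟨i, ⟨h1, h2⟩, h3⟩
      · intro hg k hk; obtain ⟨i, ⟨h1, h2⟩, h3⟩ := hg k hk; exact ⟨i, h1, h2, h3⟩
    rw [this]
    refine isClosed_iInter fun k => isClosed_iInter fun _ => ?_
    exact isClosed_biUnion_finset fun i _ =>
      (isClosed_discrete _).preimage (continuous_apply i)
  have hint : ∀ K, interior (A K) = ∅ := by
    intro K
    rw [Set.eq_empty_iff_forall_notMem]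
    intro g hg
    obtain ⟨m, hm⟩ := exists_cyl_subset isOpen_interior hg
    set k : ℕ := max K m with hk
    have hmk : m ≤ n k := le_trans (le_max_right K m) (le_trans hn.le_apply (le_refl _))
    set g' : ℕ → Bool := fun i => if i < n k then g i else false with hg'
    have hg'cyl : g' ∈ cyl g m := by
      intro i hi
      simp only [hg']
      rw [if_pos (lt_of_lt_of_le hi hmk)]
    have : g' ∈ A K := interior_subset (hm hg'cyl)
    obtain ⟨i, h1, h2, h3⟩ := this k (le_max_left K m)
    simp only [hg'] at h3
    rw [if_neg (not_lt.2 h1)] at h3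
    exact Bool.false_ne_true h3
  have hmeag : IsMeagre (⋃ K, A K) :=
    isMeagre_iUnion fun K => isNowhereDense_isMeagre
      (((hclosed K).isNowhereDense_iff).2 (hint K))
  refine hmeag.mono ?_
  rintro x ⟨Z, hZ, rfl⟩
  obtain ⟨K, hK⟩ := (Filter.eventually_atTop).1 (h Z hZ)
  refine Set.mem_iUnion.2 ⟨K, fun k hk => ?_⟩
  obtain ⟨i, hiZ, hiIco⟩ := hK k hk
  exact ⟨i, hiIco.1, hiIco.2, chi_eq_true_iff.2 hiZ⟩

/-- Hard direction of Talagrand's theorem: a meager filter admits an interval partition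
which every member meets cofinitely often. -/
lemma partition_of_meager (G : Filter ℕ) (h : MeagerFamily G.sets) :
    ∃ n : ℕ → ℕ, StrictMono n ∧ ∀ Z ∈ G, ∀ᶠ k in Filter.atTop,
      (Z ∩ Set.Ico (n k) (n (k + 1))).Nonempty := by
  classical
  rw [MeagerFamily, isMeagre_iff_countable_union_isNowhereDense] at h
  obtain ⟨S, hSnd, hScnt, hSsub⟩ := h
  obtain ⟨e, he⟩ : ∃ e : ℕ → Set (ℕ → Bool), insert ∅ S = Set.range e :=
    (hScnt.insert ∅).exists_eq_range (Set.insert_nonempty _ _)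
  have hend : ∀ j, IsNowhereDense (e j) := by
    intro j
    have : e j ∈ insert ∅ S := he ▸ Set.mem_range_self j
    rcases this with h' | h'
    · rw [h']; exact isNowhereDense_empty
    · exact hSnd _ h'
  set M : ℕ → Set (ℕ → Bool) :=
    fun k => Nat.rec (closure (e 0)) (fun k Mk => Mk ∪ closure (e (k + 1))) k with hM
  have hMs : ∀ k, M (k + 1) = M k ∪ closure (e (k + 1)) := fun _ => rfl
  have hMclosed : ∀ k, IsClosed (M k) := by
    intro k
    induction k with
    | zero => exact isClosed_closure
    | succ k ih => rw [hMs]; exact ih.union isClosed_closure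
  have hMint : ∀ k, interior (M k) = ∅ := by
    intro k
    induction k with
    | zero => exact hend 0
    | succ k ih => rw [hMs]; exact interior_union_empty (hMclosed k) ih (hend (k + 1))
  have hMmono : ∀ {j k : ℕ}, j ≤ k → M j ⊆ M k := by
    intro j k hjk
    induction k, hjk using Nat.le_induction with
    | base => exact subset_rfl
    | succ k hjk ih => rw [hMs]; exact ih.trans Set.subset_union_left
  have hMe : ∀ j, e j ⊆ M j := by
    intro j
    cases j with
    | zero => exact subset_closure
    | succ j => rw [hMs]; exact subset_closure.trans Set.subset_union_right
  have hcover : toCantor G.sets ⊆ ⋃ j, M j := by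
    intro x hx
    obtain ⟨t, htS, hxt⟩ := hSsub hx
    have : t ∈ Set.range e := he ▸ Set.mem_insert_of_mem _ htS
    obtain ⟨j, rfl⟩ := this
    exact Set.mem_iUnion.2 ⟨j, hMe j hxt⟩
  have keyk : ∀ k N, ∃ m, N < m ∧ ∀ σ : ℕ → Bool, ∃ τ : ℕ → Bool,
      (∀ i < N, τ i = σ i) ∧ ∀ g ∈ cyl τ m, g ∉ M k :=
    fun k N => escape_all (hMclosed k) (hMint k) N
  set n : ℕ → ℕ := fun k => Nat.rec 0 (fun k nk => (keyk k nk).choose) k with hn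
  have hnsucc : ∀ k, n (k + 1) = (keyk k (n k)).choose := fun _ => rfl
  have hlt : ∀ k, n k < n (k + 1) := fun k => (keyk k (n k)).choose_spec.1
  have hesc : ∀ k (σ : ℕ → Bool), ∃ τ : ℕ → Bool,
      (∀ i < n k, τ i = σ i) ∧ ∀ g ∈ cyl τ (n (k + 1)), g ∉ M k :=
    fun k => (keyk k (n k)).choose_spec.2
  have hsm : StrictMono n := strictMono_nat_of_lt_succ hlt
  refine ⟨n, hsm, ?_⟩
  intro Z hZ
  by_contra hcon
  have hfreq : ∀ j, ∃ k, j ≤ k ∧ Z ∩ Set.Ico (n k) (n (k + 1)) = ∅ := by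
    rw [Filter.not_eventually] at hcon
    intro j
    obtain ⟨k, hjk, hk⟩ := (Filter.frequently_atTop).1 hcon j
    exact ⟨k, hjk, Set.not_nonempty_iff_eq_empty.1 hk⟩
  -- choice of escape extensions
  set τf : ℕ → (ℕ → Bool) → (ℕ → Bool) := fun k σ => (hesc k σ).choose with hτf
  have spec1 : ∀ k σ, ∀ i < n k, τf k σ i = σ i := fun k σ => (hesc k σ).choose_spec.1
  have spec2 : ∀ k σ, ∀ g ∈ cyl (τf k σ) (n (k + 1)), g ∉ M k :=
    fun k σ => (hesc k σ).choose_spec.2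
  set z : ℕ → Bool := chi Z with hz
  set P : ℕ → Prop := fun k => Z ∩ Set.Ico (n k) (n (k + 1)) = ∅ with hP
  set YY : ℕ → ℕ → Bool := fun k => Nat.rec z
    (fun k Yk => if P k then (fun i => if i < n (k + 1) then τf k Yk i else z i) else Yk) k
    with hYY
  have hYYs : ∀ k, YY (k + 1) =
      if P k then (fun i => if i < n (k + 1) then τf k (YY k) i else z i) else YY k :=
    fun _ => rfl
  have htail : ∀ k i, n k ≤ i → YY k i = z i := by
    intro k
    induction k with
    | zero => intro i _; rfl
    | succ k ih =>
      intro i hi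
      rw [hYYs]
      split_ifs with hPk
      · simp only [if_neg (not_lt.2 hi)]
      · exact ih i (le_trans (le_of_lt (hlt k)) hi)
  have hagree : ∀ k i, i < n k → YY (k + 1) i = YY k i := by
    intro k i hi
    rw [hYYs]
    split_ifs with hPk
    · simp only [if_pos (lt_trans hi (hlt k))]
      exact spec1 k (YY k) i hi
    · rfl
  have hagree' : ∀ k k', k ≤ k' → ∀ i, i < n k → YY k' i = YY k i := by
    intro k k' hkk'
    induction k', hkk' using Nat.le_induction with
    | base => intro i _; rfl
    | succ k' hkk' ih =>
      intro i hi
      rw [hagree k' i (lt_of_lt_of_le hi (hsm.monotone hkk')), ih i hi]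
  have hZtrue : ∀ k i, i ∈ Z → YY k i = true := by
    intro k
    induction k with
    | zero => intro i hi; exact chi_eq_true_iff.2 hi
    | succ k ih =>
      intro i hi
      rw [hYYs]
      split_ifs with hPk
      · simp only
        by_cases h1 : i < n (k + 1)
        · rw [if_pos h1]
          by_cases h2 : i < n k
          · rw [spec1 k (YY k) i h2]; exact ih i hi
          · exfalso
            have : i ∈ Z ∩ Set.Ico (n k) (n (k + 1)) := ⟨hi, not_lt.1 h2, h1⟩
            rw [hPk] at this
            exact this
        · rw [if_neg h1]; exact chi_eq_true_iff.2 hi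
      · exact ih i hi
  set y : ℕ → Bool := fun i => YY (i + 1) i with hy
  have hyk : ∀ k i, i < n k → y i = YY k i := by
    intro k i hik
    have hi1 : i < n (i + 1) := lt_of_lt_of_le (Nat.lt_succ_self i) hsm.le_apply
    have h1 : YY (max (i + 1) k) i = YY (i + 1) i := hagree' (i + 1) _ (le_max_left _ _) i hi1
    have h2 : YY (max (i + 1) k) i = YY k i := hagree' k _ (le_max_right _ _) i hik
    show YY (i + 1) i = YY k i
    rw [← h1, h2]
  set Y : Set ℕ := {i | y i = true} with hYdef
  have hZY : Z ⊆ Y := by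
    intro i hi
    show y i = true
    exact hZtrue (i + 1) i hi
  have hYG : Y ∈ G := Filter.mem_of_superset hZ hZY
  have hchiY : chi Y = y := by
    funext i
    cases hyi : y i with
    | true => exact chi_eq_true_iff.2 hyi
    | false =>
      rw [Bool.eq_false_iff]
      intro hcontra
      have h'' : y i = true := chi_eq_true_iff.1 hcontra
      rw [hyi] at h''
      exact Bool.false_ne_true h''
  have hyin : y ∈ ⋃ j, M j := by
    have : chi Y ∈ toCantor G.sets := Set.mem_image_of_mem chi hYG
    rw [hchiY] at this
    exact hcover this
  obtain ⟨j, hj⟩ := Set.mem_iUnion.1 hyin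
  obtain ⟨k, hjk, hPk⟩ := hfreq j
  have hyMk : y ∈ M k := hMmono hjk hj
  have hcylmem : y ∈ cyl (τf k (YY k)) (n (k + 1)) := by
    intro i hi
    have h1 : y i = YY (k + 1) i := hyk (k + 1) i hi
    rw [h1, hYYs, if_pos hPk]
    simp only [if_pos hi]
  exact spec2 k (YY k) y hcylmem hyMk

end Talagrand

/-- A filter `F` on `ω` is weakly hereditarily meager iff for each sequence `⟨Xᵢ⟩` with
`⋃ᵢ Xᵢ ∈ F` and each `Xᵢᶜ ∈ F`, there is a strictly increasing `⟨nₖ⟩` such that every `Y ∈ F`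
meets `⋃_{i ∈ [nₖ, nₖ₊₁)} Xᵢ` for all but finitely many `k`. -/
theorem stmt1 (F : Filter ℕ) (hF : Filter.cofinite ≤ F) :
    WeaklyHereditarilyMeager F ↔
      ∀ X : ℕ → Set ℕ, (⋃ i, X i) ∈ F → (∀ i, (X i)ᶜ ∈ F) →
        ∃ n : ℕ → ℕ, StrictMono n ∧
          ∀ Y ∈ F, ∀ᶠ k in Filter.atTop,
            (Y ∩ ⋃ i ∈ Set.Ico (n k) (n (k + 1)), X i).Nonempty := by
  classical
  constructor
  · intro hWHM X hU hc
    set f : ℕ → ℕ := fun m => if h : ∃ i, m ∈ X i then Nat.find h else 0 with hf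
    have hfX : ∀ m (h : ∃ i, m ∈ X i), m ∈ X (f m) := by
      intro m h
      rw [hf]; simp only [dif_pos h]
      exact Nat.find_spec h
    have hfib : ∀ i, (f ⁻¹' {i})ᶜ ∈ F := by
      intro i
      refine Filter.mem_of_superset (F.inter_sets (hc i) hU) ?_
      rintro m ⟨hm1, hm2⟩
      simp only [Set.mem_compl_iff, Set.mem_preimage, Set.mem_singleton_iff]
      intro hfm
      have : ∃ j, m ∈ X j := Set.mem_iUnion.1 hm2
      exact hm1 (hfm ▸ hfX m this)
    rcases hWHM f with ⟨i, hi⟩ | hmeag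
    · exact absurd (hfib i) hi
    obtain ⟨n, hsm, hprop⟩ := partition_of_meager (Filter.map f F) hmeag
    refine ⟨n, hsm, ?_⟩
    intro Y hY
    have hZ : f '' Y ∈ Filter.map f F :=
      Filter.mem_map.2 (Filter.mem_of_superset hY (Set.subset_preimage_image f Y))
    filter_upwards [hprop (f '' Y) hZ, Filter.eventually_ge_atTop 1] with k hk hk1
    obtain ⟨i, hiim, hiIco⟩ := hk
    obtain ⟨m, hmY, rfl⟩ := hiim
    have h1 : 1 ≤ n k := by
      have : n 1 ≤ n k := hsm.monotone hk1
      have h0 : n 0 < n 1 := hsm (Nat.lt_succ_self 0)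
      omega
    have hex : ∃ j, m ∈ X j := by
      by_contra hno
      have hfm0 : f m = 0 := by rw [hf]; simp only [dif_neg hno]
      have hle : n k ≤ f m := hiIco.1
      omega
    refine ⟨m, hmY, ?_⟩
    exact Set.mem_biUnion hiIco (hfX m hex)
  · intro h f
    by_cases hfib : ∃ i, f ⁻¹' {i} ∈ Fplus F
    · exact Or.inl hfib
    right
    push_neg at hfib
    have hc : ∀ i, (f ⁻¹' {i})ᶜ ∈ F := by
      intro i
      have := hfib i
      rw [Fplus, Set.mem_setOf_eq, not_not] at this
      exact this
    have hU : (⋃ i, f ⁻¹' {i}) ∈ F := by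
      have : (⋃ i, f ⁻¹' {i}) = Set.univ := by
        ext m; simp
      rw [this]; exact Filter.univ_mem
    obtain ⟨n, hsm, hp⟩ := h (fun i => f ⁻¹' {i}) hU hc
    refine meager_of_partition (Filter.map f F) n hsm ?_
    intro Z hZ
    filter_upwards [hp (f ⁻¹' Z) hZ] with k hk
    obtain ⟨m, hmY, hm2⟩ := hk
    obtain ⟨i, hiIco, hmi⟩ := Set.mem_iUnion₂.1 hm2
    have : f m = i := hmi
    exact ⟨f m, hmY, this ▸ hiIco⟩
end

section
/- Every Fσ filter on ω is a strong P⁺-filter: if a filter F on ω is a countable union of closed subsets of 2^ω, then for every sequence (Xₙ) of members of F⁺ there exists h : ω → ω such that for every Y ∈ F, Y ∩ Xₙ ∩ h(n) ≠ ∅ for all but finitely many n. -/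
open Set Filter

lemma chi_eq_true' {α : Type*} {X : Set α} {j : α} : chi X j = true ↔ j ∈ X := by
  simp [chi]

lemma key_lemma (F : Filter ℕ) (X : Set ℕ) (hX : X ∈ Fplus F) (D : Set (ℕ → Bool))
    (hDc : IsClosed D) (hDF : D ⊆ toCantor F.sets) :
    ∃ k, ∀ z ∈ D, ∃ j, j ∈ X ∧ j < k ∧ z j = true := by
  by_contra hc
  push_neg at hc
  choose u hu hu2 using hc
  have hle : Filter.map u atTop ≤ 𝓟 D :=
    le_principal_iff.2 (mem_map.2 (univ_mem' hu))
  obtain ⟨z, hzD, hz⟩ := (hDc.isCompact).exists_clusterPt hle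
  have hmc : MapClusterPt z atTop u := hz
  have hzX : ∀ j ∈ X, z j = false := by
    intro j hj
    have hopen : IsOpen {g : ℕ → Bool | g j = z j} := by
      have : {g : ℕ → Bool | g j = z j} = (fun g : ℕ → Bool => g j) ⁻¹' {z j} := rfl
      rw [this]
      exact (continuous_apply j).isOpen_preimage _ (isOpen_discrete _)
    have hfreq : ∃ᶠ k in atTop, u k ∈ {g : ℕ → Bool | g j = z j} :=
      mapClusterPt_iff_frequently.1 hmc _ (hopen.mem_nhds rfl)
    obtain ⟨k, hk, hk2⟩ := (hfreq.and_eventually (eventually_gt_atTop j)).exists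
    have : u k j ≠ true := hu2 k j hj hk2
    rw [hk] at this
    exact Bool.eq_false_iff.2 (fun hzt => this hzt)
  obtain ⟨Y, hYF, hYz⟩ := hDF hzD
  have hYsub : Y ⊆ Xᶜ := by
    intro j hjY hjX
    have h1 : chi Y j = true := chi_eq_true'.2 hjY
    rw [hYz, hzX j hjX] at h1
    exact Bool.false_ne_true h1
  exact hX (Filter.mem_of_superset hYF hYsub)

/-- Every Fσ filter on `ω` is a strong P⁺-filter. -/
theorem stmt6 (F : Filter ℕ) (hF : Filter.cofinite ≤ F) (h : IsFsigmaFilter F) :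
    StrongPPlusFilter F := by
  intro X hX
  obtain ⟨C, hCcl, hCU⟩ := h
  set D : ℕ → Set (ℕ → Bool) := fun n => ⋃ m : Fin (n + 1), C m with hD
  have hDcl : ∀ n, IsClosed (D n) := fun n => isClosed_iUnion_of_finite (fun m => hCcl m)
  have hDsub : ∀ n, D n ⊆ toCantor F.sets := by
    intro n
    rw [hCU]
    exact iUnion_subset (fun m => subset_iUnion C (m : ℕ))
  have key : ∀ n, ∃ k, ∀ z ∈ D n, ∃ j, j ∈ X n ∧ j < k ∧ z j = true :=
    fun n => key_lemma F (X n) (hX n) (D n) (hDcl n) (hDsub n)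
  choose f hf using key
  refine ⟨f, fun Y hY => ?_⟩
  have hYC : chi Y ∈ toCantor F.sets := ⟨Y, hY, rfl⟩
  rw [hCU] at hYC
  obtain ⟨m, hm⟩ := mem_iUnion.1 hYC
  filter_upwards [eventually_ge_atTop m] with n hn
  have hmem : chi Y ∈ D n := mem_iUnion.2 ⟨⟨m, by omega⟩, hm⟩
  obtain ⟨j, hjX, hjk, hjt⟩ := hf n (chi Y) hmem
  exact ⟨j, ⟨chi_eq_true'.1 hjt, hjX⟩, hjk⟩
end

section
/- Every filter on ω with the strong Baire property is hereditarily meager. -/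
open Set Filter

/-!
Precomposition with `f : ω → ω` is a continuous open surjection of `2^ω` onto the closed set
`C_f = {χ ∘ f}`, and it pulls the trace of `F` on `C_f` back to `f(F)`. So the strong Baire
property of `F` gives `f(F)` the Baire property. A filter `G` with the Baire property that is not
meager is comeager in some basic cylinder fixing the coordinates in a finite set `I`; flipping all
coordinates outside `I` preserves that cylinder, so it contains some `ψ` with both `ψ` and its
flip in `G`, and their intersection lies inside `I`.
-/

variable {α β : Type*}

lemma chi_eq_iff {X : Set α} {ψ : α → Bool} : chi X = ψ ↔ X = {n | ψ n = true} := by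
  simp only [funext_iff, Set.ext_iff, chi]
  exact forall_congr' fun x => by cases h : ψ x <;> simp [h]

lemma mem_toCantor_iff {A : Set (Set α)} {ψ : α → Bool} :
    ψ ∈ toCantor A ↔ {n | ψ n = true} ∈ A := by
  simp only [toCantor, mem_image, chi_eq_iff, exists_eq_right]

lemma toCantor_map_sets (F : Filter α) (f : α → β) :
    toCantor (map f F).sets = (fun χ : β → Bool => χ ∘ f) ⁻¹' toCantor F.sets := by
  ext χ
  simp only [mem_preimage, mem_toCantor_iff]
  rfl

section Precomp

variable {Z : Type*} [TopologicalSpace Z] (f : α → β)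

lemma isOpenMap_rangeFactorization_precomp :
    IsOpenMap (rangeFactorization fun χ : β → Z => χ ∘ f) := by
  classical
  refine IsOpenMap.of_sections fun χ => ?_
  -- The section extends `ψ = χ' ∘ f` off the range of `f` by the values of `χ`.
  let g : range (fun χ : β → Z => χ ∘ f) → β → Z := fun ψ j =>
    if h : j ∈ range f then (ψ : α → Z) h.choose else χ j
  refine ⟨g, ?_, ?_, ?_⟩
  · refine (continuous_pi fun j => ?_).continuousAt
    by_cases h : j ∈ range f
    · simp only [g, dif_pos h]
      exact (continuous_apply _).comp continuous_subtype_val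
    · simp only [g, dif_neg h]
      exact continuous_const
  · funext j
    by_cases h : j ∈ range f
    · simp only [g, dif_pos h, rangeFactorization, Function.comp_apply, h.choose_spec]
    · simp only [g, dif_neg h]
  · rintro ⟨_, χ', rfl⟩
    refine Subtype.ext (funext fun m => ?_)
    have h : f m ∈ range f := mem_range_self m
    simp only [g, rangeFactorization, Function.comp_apply, dif_pos h, h.choose_spec]

lemma isClosed_range_precomp [CompactSpace Z] [T2Space Z] :
    IsClosed (range fun χ : β → Z => χ ∘ f) :=
  (isCompact_range (continuous_pi fun m => continuous_apply (f m))).isClosed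

end Precomp

lemma StrongBP.hasBP_map {F : Filter α} (hF : StrongBP F) (f : α → β) :
    HasBP (map f F).sets := by
  obtain ⟨O, hO, hM⟩ := hF _ (isClosed_range_precomp (Z := Bool) f)
  let ι := rangeFactorization fun χ : β → Bool => χ ∘ f
  have hι : Continuous ι := (continuous_pi fun m => continuous_apply (f m)).subtype_mk _
  refine ⟨ι ⁻¹' O, hO.preimage hι, ?_⟩
  rw [toCantor_map_sets]
  exact hM.preimage_of_isOpenMap hι (isOpenMap_rangeFactorization_precomp f)

def xorHomeomorph (m : α → Bool) : (α → Bool) ≃ₜ (α → Bool) where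
  toFun χ n := xor (m n) (χ n)
  invFun χ n := xor (m n) (χ n)
  left_inv χ := by funext n; simp
  right_inv χ := by funext n; simp
  continuous_toFun := continuous_pi fun n =>
    (continuous_of_discreteTopology (f := xor (m n))).comp (continuous_apply n)
  continuous_invFun := continuous_pi fun n =>
    (continuous_of_discreteTopology (f := xor (m n))).comp (continuous_apply n)

lemma xorHomeomorph_chi_compl_apply_of_mem {X : Set α} {ψ : α → Bool} {n : α} (hn : n ∈ X) :
    xorHomeomorph (chi Xᶜ) ψ n = ψ n := by
  simp [xorHomeomorph, chi, hn]

lemma setOf_inter_setOf_xorHomeomorph_chi_compl_subset (X : Set α) (ψ : α → Bool) :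
    {n | ψ n = true} ∩ {n | xorHomeomorph (chi Xᶜ) ψ n = true} ⊆ X := by
  rintro n ⟨h₁, h₂⟩
  by_contra hn
  simp_all [xorHomeomorph, chi]

lemma HasBP.exists_finite_mem_or_meagerFamily {G : Filter α} (hG : HasBP G.sets) :
    (∃ Y ∈ G, Y.Finite) ∨ MeagerFamily G.sets := by
  obtain ⟨U, hU, hM⟩ := hG
  set A := toCantor G.sets
  refine or_iff_not_imp_right.mpr fun hA => ?_
  obtain ⟨χ₀, hχ₀⟩ : U.Nonempty := by
    rw [nonempty_iff_ne_empty]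
    rintro rfl
    exact hA (by rwa [← bot_eq_empty, symmDiff_bot] at hM)
  obtain ⟨I, u, hIu, hIU⟩ := isOpen_pi_iff.mp hU χ₀ hχ₀
  let cyl := (I : Set α).pi fun a => {χ₀ a}
  have hcyl : cyl ⊆ U := (pi_mono fun a ha => singleton_subset_iff.mpr (hIu a ha).2).trans hIU
  let φ := xorHomeomorph (chi (I : Set α)ᶜ)
  have hφ : ∀ ψ ∈ cyl, φ ψ ∈ cyl := fun ψ hψ a ha => by
    rw [xorHomeomorph_chi_compl_apply_of_mem ha]
    exact hψ a ha
  have hUA : ∀ᶠ ψ in residual _, ψ ∈ U → ψ ∈ A := by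
    filter_upwards [hM] with ψ hψ hψU
    by_contra hψA
    exact hψ (Or.inr ⟨hψU, hψA⟩)
  have hUA' : ∀ᶠ ψ in residual _, φ ψ ∈ U → φ ψ ∈ A := by
    rw [← φ.residual_map_eq] at hUA
    exact hUA
  obtain ⟨ψ, hψ, hψA, hφψA⟩ := (dense_of_mem_residual (hUA.and hUA')).inter_open_nonempty cyl
    (isOpen_set_pi I.finite_toSet fun _ _ => isOpen_discrete _) ⟨χ₀, fun _ _ => rfl⟩
  refine ⟨_, inter_mem (mem_toCantor_iff.mp (hψA (hcyl hψ)))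
    (mem_toCantor_iff.mp (hφψA (hcyl (hφ ψ hψ)))), ?_⟩
  exact I.finite_toSet.subset (setOf_inter_setOf_xorHomeomorph_chi_compl_subset _ ψ)

theorem stmt8_general (F : Filter ℕ) (h : StrongBP F) :
    HereditarilyMeager F :=
  fun f => (h.hasBP_map f).exists_finite_mem_or_meagerFamily

/-- Every filter on `ω` with the strong Baire property is hereditarily meager. -/
theorem stmt8 (F : Filter ℕ) (hF : Filter.cofinite ≤ F) (h : StrongBP F) :
    HereditarilyMeager F :=
  stmt8_general F h
end

section
/- There exists a mad family 𝒜 on ω such that the filter F(𝒜) is not a strong P⁺-filter. -/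
open Set Filter

/-! The mad family is built on `ℕ ≅ ℕ × ℕ` (via `Nat.pair`), whose columns all lie in `F(𝒜)⁺`
because each column is partitioned into infinitely many infinite blocks put into `𝒜`. The columns
are also the nodes of a tree in which every `f : ℕ → ℕ` determines a branch: the next node is coded
by the current node `n` together with `f n`. The comb of `f` (the points of height `≤ f n` in each
column `n` of its branch) is almost disjoint from the comb of any `g` with a different branch, and
it is put into `𝒜` as well. If `f` witnessed the strong P⁺-property for the sequence of columns,
then the member `(comb f)ᶜ` of `F(𝒜)` would have to meet `col n ∩ [0, f n)` for almost all `n`, but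
this set is contained in the comb of `f` for the infinitely many nodes `n` of the branch of `f`. -/

section AlmostDisjoint

variable {α : Type*}

def IsAlmostDisjoint (𝒜 : Set (Set α)) : Prop :=
  (∀ A ∈ 𝒜, A.Infinite) ∧ 𝒜.Pairwise fun A B => (A ∩ B).Finite

theorem IsAlmostDisjoint.insert {𝒜 : Set (Set α)} {X : Set α} (h𝒜 : IsAlmostDisjoint 𝒜)
    (hX : X.Infinite) (hX𝒜 : ∀ A ∈ 𝒜, (X ∩ A).Finite) : IsAlmostDisjoint (insert X 𝒜) := by
  refine ⟨?_, Set.pairwise_insert.2 ⟨h𝒜.2, fun A hA _ => ⟨hX𝒜 A hA, ?_⟩⟩⟩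
  · rintro A (rfl | hA)
    exacts [hX, h𝒜.1 A hA]
  · exact Set.inter_comm X A ▸ hX𝒜 A hA

theorem exists_maximal_isAlmostDisjoint {ℬ : Set (Set α)} (hℬ : IsAlmostDisjoint ℬ) :
    ∃ 𝒜, ℬ ⊆ 𝒜 ∧ Maximal IsAlmostDisjoint 𝒜 := by
  refine zorn_subset_nonempty {𝒜 | IsAlmostDisjoint 𝒜} (fun c hc hchain _ => ?_) ℬ hℬ
  refine ⟨⋃₀ c, ⟨?_, ?_⟩, fun _ => Set.subset_sUnion_of_mem⟩
  · rintro A ⟨𝒜, h𝒜, hA⟩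
    exact (hc h𝒜).1 A hA
  · exact (Set.pairwise_sUnion hchain.directedOn).2 fun 𝒜 h𝒜 => (hc h𝒜).2

theorem madFamily_of_maximal {𝒜 : Set (Set ℕ)} (hmax : Maximal IsAlmostDisjoint 𝒜)
    (hinf : 𝒜.Infinite) : MadFamily 𝒜 := by
  refine ⟨⟨hinf, hmax.1.1, fun A hA B hB => hmax.1.2 hA hB⟩, fun X hX => ?_⟩
  by_contra! hX𝒜
  have hX_mem : X ∈ 𝒜 :=
    hmax.2 (hmax.1.insert hX hX𝒜) (Set.subset_insert X 𝒜) (Set.mem_insert X 𝒜)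
  exact hX (Set.inter_self X ▸ hX𝒜 X hX_mem)

end AlmostDisjoint

section MadFilter

variable {𝒜 : Set (Set ℕ)}

theorem mem_madIdeal_of_subset {X Y : Set ℕ} (hY : Y ∈ madIdeal 𝒜) (hXY : X ⊆ Y) :
    X ∈ madIdeal 𝒜 := by
  obtain ⟨s, hs, hfin⟩ := hY
  exact ⟨s, hs, hfin.subset (Set.sdiff_subset_sdiff_left hXY)⟩

theorem union_mem_madIdeal {X Y : Set ℕ} (hX : X ∈ madIdeal 𝒜) (hY : Y ∈ madIdeal 𝒜) :
    X ∪ Y ∈ madIdeal 𝒜 := by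
  classical
  obtain ⟨s, hs, hsX⟩ := hX
  obtain ⟨t, ht, htY⟩ := hY
  refine ⟨s ∪ t, by simpa using Set.union_subset hs ht, (hsX.union htY).subset ?_⟩
  rintro z ⟨hzXY, hz⟩
  simp only [Finset.mem_union, Set.mem_iUnion, not_exists] at hz
  rcases hzXY with hzX | hzY
  · exact Or.inl ⟨hzX, by simpa using fun A hA => hz A (Or.inl hA)⟩
  · exact Or.inr ⟨hzY, by simpa using fun A hA => hz A (Or.inr hA)⟩

theorem compl_mem_madIdeal_of_mem_madFilter {V : Set ℕ} (hV : V ∈ madFilter 𝒜) :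
    Vᶜ ∈ madIdeal 𝒜 := by
  let idealFilter : Filter ℕ := Filter.comk (· ∈ madIdeal 𝒜) ⟨∅, by simp, by simp⟩
    (fun _ ht _ hst => mem_madIdeal_of_subset ht hst) (fun _ hs _ ht => union_mem_madIdeal hs ht)
  have hle : idealFilter ≤ madFilter 𝒜 := by
    refine le_inf (fun W hW => ⟨∅, by simp, by simpa using hW⟩) ?_
    refine le_iInf₂ fun A hA => Filter.le_principal_iff.2 ?_
    exact ⟨{A}, by simpa using hA, by simp⟩
  exact hle hV

theorem compl_mem_madFilter {A : Set ℕ} (hA : A ∈ 𝒜) : Aᶜ ∈ madFilter 𝒜 :=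
  Filter.mem_inf_of_right <|
    Filter.mem_iInf_of_mem A (Filter.mem_iInf_of_mem hA (Filter.mem_principal_self _))

theorem mem_Fplus_madFilter (h𝒜 : IsAlmostDisjoint 𝒜) {X : Set ℕ}
    (hX : {A ∈ 𝒜 | A ⊆ X}.Infinite) : X ∈ Fplus (madFilter 𝒜) := by
  intro hXc
  obtain ⟨s, hs𝒜, hfin⟩ := compl_compl X ▸ compl_mem_madIdeal_of_mem_madFilter hXc
  obtain ⟨B, ⟨hB𝒜, hBX⟩, hBs⟩ := (hX.sdiff s.finite_toSet).nonempty
  have hcover : B ⊆ (X \ ⋃ A ∈ s, A) ∪ ⋃ A ∈ s, B ∩ A := by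
    intro z hz
    by_cases hzs : z ∈ ⋃ A ∈ s, A
    · obtain ⟨A, hA, hzA⟩ := Set.mem_iUnion₂.1 hzs
      exact Or.inr (Set.mem_iUnion₂.2 ⟨A, hA, hz, hzA⟩)
    · exact Or.inl ⟨hBX hz, hzs⟩
  refine h𝒜.1 B hB𝒜 ((hfin.union (s.finite_toSet.biUnion fun A hA => ?_)).subset hcover)
  exact h𝒜.2 hB𝒜 (hs𝒜 hA) fun hBA => hBs (hBA ▸ hA)

end MadFilter

namespace PairGrid

open Nat

def col (n : ℕ) : Set ℕ := {z | (unpair z).1 = n}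

def comb (S : Set ℕ) (h : ℕ → ℕ) : Set ℕ := {z | (unpair z).1 ∈ S ∧ (unpair z).2 ≤ h (unpair z).1}

def block (n r : ℕ) : Set ℕ := Set.range fun s => pair n (pair r s)

theorem comb_inter_comb_subset (S T : Set ℕ) (g h : ℕ → ℕ) :
    comb S g ∩ comb T h ⊆ comb (S ∩ T) g :=
  fun _ ⟨⟨hS, hg⟩, hT, _⟩ => ⟨⟨hS, hT⟩, hg⟩

theorem comb_inter_col_subset (S : Set ℕ) (h : ℕ → ℕ) (n : ℕ) :
    comb S h ∩ col n ⊆ comb (S ∩ {n}) h :=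
  fun _ ⟨⟨hS, hh⟩, hn⟩ => ⟨⟨hS, hn⟩, hh⟩

theorem comb_finite {S : Set ℕ} (hS : S.Finite) (h : ℕ → ℕ) : (comb S h).Finite := by
  refine (hS.biUnion fun n _ => (Set.finite_Iic (h n)).image (pair n)).subset ?_
  rintro z ⟨hzS, hzh⟩
  exact Set.mem_iUnion₂.2 ⟨_, hzS, (unpair z).2, hzh, pair_unpair z⟩

theorem comb_infinite {S : Set ℕ} (hS : S.Infinite) (h : ℕ → ℕ) : (comb S h).Infinite := by
  have hinj : Function.Injective fun n => pair n 0 := fun m n hmn => by simpa using hmn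
  refine (hS.image hinj.injOn).mono ?_
  rintro _ ⟨n, hn, rfl⟩
  simpa [comb] using hn

theorem comb_congr {S : Set ℕ} {g h : ℕ → ℕ} (hgh : Set.EqOn g h S) : comb S g = comb S h := by
  ext z
  exact and_congr_right fun hz => by rw [hgh hz]

theorem col_inter_Iio_subset_comb {S : Set ℕ} {n : ℕ} (hn : n ∈ S) (h : ℕ → ℕ) :
    col n ∩ Set.Iio (h n) ⊆ comb S h := by
  rintro z ⟨rfl, hz⟩
  exact ⟨hn, (unpair_right_le z).trans (Nat.le_of_lt hz)⟩

theorem block_subset_col (n r : ℕ) : block n r ⊆ col n := by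
  rintro _ ⟨s, rfl⟩
  simp [col]

theorem block_infinite (n r : ℕ) : (block n r).Infinite :=
  Set.infinite_range_of_injective fun s t hst => by simpa using hst

theorem block_eq_block_iff {n r n' r' : ℕ} : block n r = block n' r' ↔ n = n' ∧ r = r' := by
  refine ⟨fun h => ?_, fun ⟨hn, hr⟩ => hn ▸ hr ▸ rfl⟩
  obtain ⟨s, hs⟩ : pair n (pair r 0) ∈ block n' r' := h ▸ ⟨0, rfl⟩
  simp only [pair_eq_pair] at hs
  exact ⟨hs.1.symm, hs.2.1.symm⟩

theorem disjoint_block {n r n' r' : ℕ} (h : block n r ≠ block n' r') :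
    Disjoint (block n r) (block n' r') := by
  refine Set.disjoint_left.2 ?_
  rintro _ ⟨s, rfl⟩ ⟨s', hs'⟩
  simp only [pair_eq_pair] at hs'
  obtain ⟨rfl, rfl, -⟩ := hs'
  exact h rfl

theorem comb_inter_block_finite (S : Set ℕ) (h : ℕ → ℕ) (n r : ℕ) :
    (comb S h ∩ block n r).Finite :=
  (comb_finite ((Set.finite_singleton n).subset Set.inter_subset_right) h).subset
    ((Set.inter_subset_inter_right _ (block_subset_col n r)).trans (comb_inter_col_subset S h n))

/-- The `k`-th node of the branch of `h` in the tree where node `n` has, for each `m`, the child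
`pair n m + 1` (the `+ 1` keeps the root `0` from being a child); the branch of `h` continues from
`n` to the child with `m = h n`. -/
def branch (h : ℕ → ℕ) : ℕ → ℕ
  | 0 => 0
  | k + 1 => pair (branch h k) (h (branch h k)) + 1

variable {g h : ℕ → ℕ}

theorem branch_succ_eq_branch_succ_iff {k j : ℕ} :
    branch g (k + 1) = branch h (j + 1) ↔
      branch g k = branch h j ∧ g (branch g k) = h (branch h j) := by
  simp [branch]

theorem eq_of_branch_eq_branch : ∀ {k j : ℕ}, branch g k = branch h j → k = j
  | 0, 0, _ => rfl
  | 0, _ + 1, e => absurd e.symm (succ_ne_zero _)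
  | _ + 1, 0, e => absurd e (succ_ne_zero _)
  | _ + 1, _ + 1, e =>
    congrArg (· + 1) (eq_of_branch_eq_branch (branch_succ_eq_branch_succ_iff.1 e).1)

theorem branch_eq_of_le {i k : ℕ} (e : branch g k = branch h k) (hik : i ≤ k) :
    branch g i = branch h i := by
  induction k with
  | zero => rwa [Nat.le_zero.1 hik]
  | succ k ih =>
    rcases Nat.le_succ_iff.1 hik with hik | rfl
    exacts [ih (branch_succ_eq_branch_succ_iff.1 e).1 hik, e]

theorem branch_injective (h : ℕ → ℕ) : Function.Injective (branch h) :=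
  fun _ _ e => eq_of_branch_eq_branch e

theorem range_branch_inter_finite_or_eq (g h : ℕ → ℕ) :
    (Set.range (branch g) ∩ Set.range (branch h)).Finite ∨ branch g = branch h := by
  by_cases hgh : branch g = branch h
  · exact Or.inr hgh
  obtain ⟨d, hd⟩ := Function.ne_iff.1 hgh
  refine Or.inl (((Set.finite_Iio d).image (branch g)).subset ?_)
  rintro _ ⟨⟨k, rfl⟩, j, e⟩
  obtain rfl := eq_of_branch_eq_branch e
  exact ⟨j, lt_of_not_ge fun hdj => hd (branch_eq_of_le e.symm hdj), rfl⟩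

theorem eqOn_range_of_branch_eq (e : branch g = branch h) :
    Set.EqOn g h (Set.range (branch g)) := by
  rintro _ ⟨k, rfl⟩
  calc g (branch g k) = h (branch h k) := (branch_succ_eq_branch_succ_iff.1 (congrFun e (k + 1))).2
    _ = h (branch g k) := by rw [congrFun e k]

def treeComb (h : ℕ → ℕ) : Set ℕ := comb (Set.range (branch h)) h

theorem treeComb_inter_finite (hne : treeComb g ≠ treeComb h) :
    (treeComb g ∩ treeComb h).Finite := by
  rcases range_branch_inter_finite_or_eq g h with hfin | e
  · exact (comb_finite hfin g).subset (comb_inter_comb_subset _ _ _ _)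
  · exact absurd (by rw [treeComb, treeComb, comb_congr (eqOn_range_of_branch_eq e), e]) hne

def baseFamily : Set (Set ℕ) := Set.range treeComb ∪ Set.range fun p : ℕ × ℕ => block p.1 p.2

theorem isAlmostDisjoint_baseFamily : IsAlmostDisjoint baseFamily := by
  refine ⟨?_, ?_⟩
  · rintro _ (⟨h, rfl⟩ | ⟨⟨n, r⟩, rfl⟩)
    exacts [comb_infinite (Set.infinite_range_of_injective (branch_injective h)) h,
      block_infinite n r]
  · rintro _ (⟨g, rfl⟩ | ⟨⟨n, r⟩, rfl⟩) _ (⟨h, rfl⟩ | ⟨⟨n', r'⟩, rfl⟩) hne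
    · exact treeComb_inter_finite hne
    · exact comb_inter_block_finite _ g n' r'
    · exact Set.inter_comm (treeComb h) _ ▸ comb_inter_block_finite _ h n r
    · exact (disjoint_block hne).inter_eq ▸ Set.finite_empty

theorem infinite_setOf_mem_subset_col {𝒜 : Set (Set ℕ)} (h𝒜 : baseFamily ⊆ 𝒜) (n : ℕ) :
    {A ∈ 𝒜 | A ⊆ col n}.Infinite := by
  have hinj : Function.Injective (block n) := fun r r' e => (block_eq_block_iff.1 e).2
  refine (Set.infinite_range_of_injective hinj).mono ?_
  rintro _ ⟨r, rfl⟩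
  exact ⟨h𝒜 (Or.inr ⟨(n, r), rfl⟩), block_subset_col n r⟩

end PairGrid

/-- There is a mad family `𝒜` on `ω` such that `F(𝒜)` is not a strong P⁺-filter. -/
theorem stmt12 : ∃ 𝒜 : Set (Set ℕ), MadFamily 𝒜 ∧ ¬ StrongPPlusFilter (madFilter 𝒜) := by
  obtain ⟨𝒜, hbase, hmax⟩ := exists_maximal_isAlmostDisjoint PairGrid.isAlmostDisjoint_baseFamily
  have hblocks := PairGrid.infinite_setOf_mem_subset_col hbase
  refine ⟨𝒜, madFamily_of_maximal hmax ((hblocks 0).mono (Set.sep_subset _ _)), fun hSP => ?_⟩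
  obtain ⟨f, hf⟩ := hSP PairGrid.col fun n => mem_Fplus_madFilter hmax.1 (hblocks n)
  have hcomb : (PairGrid.treeComb f)ᶜ ∈ madFilter 𝒜 := compl_mem_madFilter (hbase (Or.inl ⟨f, rfl⟩))
  have hbranch : ∃ᶠ n in atTop, n ∈ Set.range (PairGrid.branch f) :=
    Nat.frequently_atTop_iff_infinite.2 <|
      Set.infinite_range_of_injective (PairGrid.branch_injective f)
  obtain ⟨n, ⟨z, ⟨hz_comb, hz_col⟩, hz_lt⟩, hn⟩ := ((hf _ hcomb).and_frequently hbranch).exists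
  exact hz_comb (PairGrid.col_inter_Iio_subset_comb hn f ⟨hz_col, hz_lt⟩)
end

section
/- Every proper filter on ω generated by fewer than 𝔡 sets is a P⁺-filter: if H is a proper filter on ω generated by a family 𝒳 of subsets of ω with |𝒳| < 𝔡, then H is a P⁺-filter. -/
open Set Filter

/-!
Let `X₀ ⊇* X₁ ⊇* ⋯` lie in `H⁺`, and replace `Xₙ` by the finite modification `X₀ ∩ ⋯ ∩ Xₙ`, which
still lies in `H⁺`. For each of the fewer than `𝔡` finite intersections `B` of generators and each
`n`, let `f_B(n)` be a point of `B ∩ Xₙ` above `n`. A single `g` that is not dominated by any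
`f_B` yields `Y = ⋃ₙ Xₙ ∩ [n, g(n))`: it is almost contained in every `Xₘ`, and it meets every `B`
in the infinitely many points `f_B(n) < g(n)`, so `Y ∈ H⁺`.
-/

open Cardinal

lemma Dominating.not_countable {D : Set (ℕ → ℕ)} (hD : Dominating D) : ¬ D.Countable := by
  intro hc
  obtain ⟨f₀, hf₀, -⟩ := hD 0
  obtain ⟨e, rfl⟩ := hc.exists_eq_range ⟨f₀, hf₀⟩
  obtain ⟨_, ⟨k, rfl⟩, hk⟩ := hD fun n => (Finset.range (n + 1)).sup (e · n) + 1
  obtain ⟨n, hdom, hkn⟩ := (hk.and (eventually_ge_atTop k)).exists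
  have := Finset.le_sup (f := (e · n)) (Finset.mem_range.2 (Nat.lt_add_one_of_le hkn))
  omega

lemma frakD_le_mk {D : Set (ℕ → ℕ)} (hD : Dominating D) : frakD ≤ #D :=
  csInf_le' ⟨D, hD, rfl⟩

lemma aleph0_lt_frakD : ℵ₀ < frakD := by
  obtain ⟨D, hD, hmk⟩ : frakD ∈ {c : Cardinal | ∃ D : Set (ℕ → ℕ), Dominating D ∧ #D = c} :=
    csInf_mem ⟨_, Set.univ, fun g => ⟨g, trivial, .of_forall fun _ => le_rfl⟩, rfl⟩
  rw [← hmk, ← not_le, Cardinal.mk_le_aleph0_iff, Set.countable_coe_iff]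
  exact hD.not_countable

lemma exists_forall_frequently_lt_of_mk_lt_frakD {ι : Type} (f : ι → ℕ → ℕ) (h : #ι < frakD) :
    ∃ g : ℕ → ℕ, ∀ i, ∃ᶠ n in atTop, f i n < g n := by
  have hnd : ¬ Dominating (Set.range f) := fun hD =>
    ((frakD_le_mk hD).trans mk_range_le).not_gt h
  simpa only [Dominating, not_forall, not_exists, not_and, Set.forall_mem_range,
    Filter.not_eventually, not_le] using hnd

lemma mk_finite_subsets_le {α : Type*} (S : Set α) :
    #{t : Set α // t.Finite ∧ t ⊆ S} ≤ max ℵ₀ #S := by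
  refine (mk_le_of_surjective (f := fun l : List S =>
    ⟨(↑) '' {a | a ∈ l}, (List.finite_toSet l).image _, Subtype.coe_image_subset S _⟩)
    ?_).trans (mk_list_le_max S)
  rintro ⟨t, ht, htS⟩
  obtain ⟨u, hu⟩ := (ht.preimage Subtype.val_injective.injOn).exists_finset_coe
  refine ⟨u.toList, Subtype.ext ?_⟩
  simp only [Finset.mem_toList, Finset.setOfPred_mem, hu, Subtype.image_preimage_coe,
    inter_eq_right.2 htS]

section Fplus

variable {α : Type*}

lemma mem_Fplus_of_diff_finite {F : Filter α} (hF : F ≤ cofinite) {Z W : Set α}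
    (hZ : Z ∈ Fplus F) (hZW : (Z \ W).Finite) : W ∈ Fplus F := fun hW =>
  hZ <| mem_of_superset (inter_mem hW (hF hZW.compl_mem_cofinite))
    fun _ ⟨hxW, hx⟩ hxZ => hx ⟨hxZ, hxW⟩

variable {ι : Type*} {p : ι → Prop} {s : ι → Set α} {G : Filter α}

lemma compl_mem_cofinite_inf_iff (hG : G.HasBasis p s) {Z : Set α} :
    Zᶜ ∈ cofinite ⊓ G ↔ ∃ i, p i ∧ (s i ∩ Z).Finite := by
  constructor
  · intro hZ
    obtain ⟨t₁, ht₁, t₂, ht₂, ht⟩ := mem_inf_iff_superset.1 hZ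
    obtain ⟨i, hi, hit⟩ := hG.mem_iff.1 ht₂
    exact ⟨i, hi, (mem_cofinite.1 ht₁).subset fun x ⟨hxs, hxZ⟩ hxt => ht ⟨hxt, hit hxs⟩ hxZ⟩
  · rintro ⟨i, hi, hfin⟩
    exact mem_inf_of_inter hfin.compl_mem_cofinite (hG.mem_of_mem hi)
      fun x ⟨hx, hxs⟩ hxZ => hx ⟨hxs, hxZ⟩

lemma mem_Fplus_cofinite_inf_iff (hG : G.HasBasis p s) {Z : Set α} :
    Z ∈ Fplus (cofinite ⊓ G) ↔ ∀ i, p i → (s i ∩ Z).Infinite := by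
  simp only [Fplus, mem_ofPred_eq, compl_mem_cofinite_inf_iff hG, not_exists, not_and,
    Set.Infinite]

end Fplus

lemma diff_finite_of_le {α : Type*} {X : ℕ → Set α} (hX : ∀ n, (X (n + 1) \ X n).Finite)
    {m n : ℕ} (hmn : m ≤ n) : (X n \ X m).Finite := by
  induction n, hmn using Nat.le_induction with
  | base => simp
  | succ n _ ih =>
    refine ((hX n).union ih).subset fun x ⟨hx, hxm⟩ => ?_
    by_cases hxn : x ∈ X n
    exacts [Or.inr ⟨hxn, hxm⟩, Or.inl ⟨hx, hxn⟩]

lemma diff_biInter_le_finite {α : Type*} {X : ℕ → Set α} (hX : ∀ n, (X (n + 1) \ X n).Finite)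
    (n : ℕ) : (X n \ ⋂ k ≤ n, X k).Finite := by
  simp only [sdiff_iInter]
  exact (finite_le_nat n).biUnion fun _ hk => diff_finite_of_le hX hk

theorem pPlusFilter_cofinite_inf {ι : Type} {p : ι → Prop} {s : ι → Set ℕ} {G : Filter ℕ}
    (hG : G.HasBasis p s) (hcard : #{i // p i} < frakD) : PPlusFilter (cofinite ⊓ G) := by
  intro X hX hdec
  have hX' : ∀ n i, p i → (s i ∩ ⋂ k ≤ n, X k).Infinite := fun n =>
    (mem_Fplus_cofinite_inf_iff hG).1
      (mem_Fplus_of_diff_finite inf_le_left (hX n) (diff_biInter_le_finite hdec n))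
  choose b hb hnb using fun (i : {i // p i}) n => (hX' n i i.2).exists_gt n
  obtain ⟨g, hg⟩ := exists_forall_frequently_lt_of_mk_lt_frakD b hcard
  refine ⟨⋃ n, (⋂ k ≤ n, X k) ∩ Ico n (g n), (mem_Fplus_cofinite_inf_iff hG).2 fun i hi => ?_,
    fun m => ?_⟩
  · refine infinite_of_forall_exists_gt fun m => ?_
    obtain ⟨n, hbn, hmn⟩ := ((hg ⟨i, hi⟩).and_eventually (eventually_gt_atTop m)).exists
    exact ⟨b ⟨i, hi⟩ n, ⟨(hb ⟨i, hi⟩ n).1, mem_iUnion.2 ⟨n, (hb _ n).2, (hnb _ n).le, hbn⟩⟩,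
      hmn.trans (hnb _ n)⟩
  · refine ((finite_lt_nat m).biUnion fun n _ => finite_Ico n (g n)).subset ?_
    rintro x ⟨hx, hxm⟩
    obtain ⟨n, hxn, hx⟩ := mem_iUnion.1 hx
    have hnm : n < m := not_le.1 fun hmn => hxm (mem_iInter₂.1 hxn m hmn)
    exact mem_biUnion hnm hx

theorem stmt14_general (𝒳 : Set (Set ℕ)) (hcard : Cardinal.mk 𝒳 < frakD)
    (H : Filter ℕ) (hgen : H = Filter.cofinite ⊓ ⨅ X ∈ 𝒳, 𝓟 X) :
    PPlusFilter H := by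
  rw [hgen, ← generate_eq_biInf]
  exact pPlusFilter_cofinite_inf (hasBasis_generate 𝒳)
    ((mk_finite_subsets_le 𝒳).trans_lt (max_lt aleph0_lt_frakD hcard))

/-- Every proper filter on `ω` generated by fewer than `𝔡` sets is a P⁺-filter. -/
theorem stmt14 (𝒳 : Set (Set ℕ)) (hcard : Cardinal.mk 𝒳 < frakD)
    (H : Filter ℕ) (hgen : H = Filter.cofinite ⊓ ⨅ X ∈ 𝒳, 𝓟 X)
    (hproper : ∀ Y ∈ H, Y.Infinite) :
    PPlusFilter H :=
  stmt14_general 𝒳 hcard H hgen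
end

section
/- Let D be a dominating family of functions from ω to ω, each member of which is strictly increasing and satisfies f(0) ≥ 1. Then for every infinite set A ⊆ ω there exists f ∈ D such that A ∩ [fⁿ(0), f^{n+1}(0)) ≠ ∅ for all but finitely many n, where fⁿ denotes the n-fold iterate of f. -/
open Set Filter

/-- If `D` is a dominating family of strictly increasing functions with `f 0 ≥ 1`, then for
every infinite `A ⊆ ω` there is `f ∈ D` such that `A` meets `[fⁿ(0), fⁿ⁺¹(0))` for all but
finitely many `n`. -/
theorem stmt15 (D : Set (ℕ → ℕ)) (hdom : Dominating D)
    (hmono : ∀ f ∈ D, StrictMono f) (hpos : ∀ f ∈ D, 1 ≤ f 0) :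
    ∀ A : Set ℕ, A.Infinite →
      ∃ f ∈ D, ∀ᶠ n in Filter.atTop, (A ∩ Set.Ico (f^[n] 0) (f^[n + 1] 0)).Nonempty := by
  intro A hA
  choose g hgA hglt using fun n => hA.exists_gt n
  obtain ⟨f, hfD, hf⟩ := hdom (fun n => g n + 1)
  refine ⟨f, hfD, ?_⟩
  obtain ⟨N, hN⟩ := Filter.eventually_atTop.mp hf
  have hstep : ∀ k, k + 1 ≤ f k := by
    intro k
    induction k with
    | zero => exact hpos f hfD
    | succ k ih => exact Nat.lt_of_le_of_lt ih (hmono f hfD (Nat.lt_succ_self k))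
  have hiter : ∀ n, n ≤ f^[n] 0 := by
    intro n
    induction n with
    | zero => simp
    | succ n ih =>
      rw [Function.iterate_succ_apply']
      exact le_trans (Nat.succ_le_succ ih) (hstep _)
  refine Filter.eventually_atTop.mpr ⟨N, fun n hn => ?_⟩
  set m := f^[n] 0 with hm
  have hmN : N ≤ m := le_trans hn (hiter n)
  have hfm : g m + 1 ≤ f m := hN m hmN
  refine ⟨g m, hgA m, ?_, ?_⟩
  · exact le_of_lt (hglt m)
  · rw [Function.iterate_succ_apply']
    exact lt_of_lt_of_le (Nat.lt_succ_self _) hfm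
end

section
/- Assume the continuum hypothesis. Then there exists a mad family 𝒜 = {A_α : α < ω₁} on ω such that for every X ⊆ ω with X ∉ F(𝒜) ∪ I(𝒜), there exists α < ω₁ such that for all β > α both A_β ∖ X and A_β ∩ X are infinite. -/
open Set Filter

/-!
Under CH enumerate `𝒫(ω)` as `(E γ)_{γ < ω₁}` and build `A α` by recursion: after the columns
of `ω ≅ ω × ω`, each `A α` is almost disjoint from the countably many earlier sets and splits
every `E γ`, `γ < α`, that is positive for them, i.e. lies neither in the filter nor in the
ideal they generate; such an `A α` is found by a diagonal enumeration. A set outside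
`F(𝒜) ∪ I(𝒜)` is positive for every initial segment, so it is split by all `A β` beyond its
index. Maximality follows: an infinite set outside `I(𝒜)` is either in `F(𝒜)`, and then
almost contains some `A β`, or it is split.
-/

namespace madIdeal

variable {𝒜 ℬ : Set (Set ℕ)} {X Y : Set ℕ}

theorem empty_mem : ∅ ∈ madIdeal 𝒜 := ⟨∅, by simp, by simp⟩

theorem mono_left (h : X ⊆ Y) (hY : Y ∈ madIdeal 𝒜) : X ∈ madIdeal 𝒜 := by
  obtain ⟨s, hs, hfin⟩ := hY
  exact ⟨s, hs, hfin.subset (sdiff_subset_sdiff_left h)⟩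

theorem mono_right (h : ℬ ⊆ 𝒜) (hX : X ∈ madIdeal ℬ) : X ∈ madIdeal 𝒜 := by
  obtain ⟨s, hs, hfin⟩ := hX
  exact ⟨s, hs.trans h, hfin⟩

theorem union_mem (hX : X ∈ madIdeal 𝒜) (hY : Y ∈ madIdeal 𝒜) : X ∪ Y ∈ madIdeal 𝒜 := by
  classical
  obtain ⟨s, hs, hsfin⟩ := hX
  obtain ⟨t, ht, htfin⟩ := hY
  refine ⟨s ∪ t, by simpa using union_subset hs ht, (hsfin.union htfin).subset ?_⟩
  rw [Finset.set_biUnion_union, union_sdiff_distrib]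
  exact union_subset_union (sdiff_subset_sdiff_right subset_union_left)
    (sdiff_subset_sdiff_right subset_union_right)

theorem of_finite (hX : X.Finite) : X ∈ madIdeal 𝒜 := ⟨∅, by simp, by simpa using hX⟩

end madIdeal

theorem subset_madIdeal (𝒜 : Set (Set ℕ)) : 𝒜 ⊆ madIdeal 𝒜 :=
  fun A hA => ⟨{A}, by simpa using hA, by simp⟩

theorem mem_madFilter_iff {𝒜 : Set (Set ℕ)} {X : Set ℕ} :
    X ∈ madFilter 𝒜 ↔ Xᶜ ∈ madIdeal 𝒜 := by
  constructor
  · intro hX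
    let dual : Filter ℕ := Filter.comk (· ∈ madIdeal 𝒜) madIdeal.empty_mem
      (fun _ ht _ hst => madIdeal.mono_left hst ht) (fun _ hs _ ht => madIdeal.union_mem hs ht)
    have hle : dual ≤ madFilter 𝒜 := by
      refine le_inf (fun Y hY => madIdeal.of_finite hY) (le_iInf₂ fun A hA => ?_)
      simpa [dual, Filter.mem_comk] using subset_madIdeal 𝒜 hA
    exact hle hX
  · rintro ⟨s, hs, hfin⟩
    have hcover : (Xᶜ \ ⋃ A ∈ s, A)ᶜ ∩ ⋂ A ∈ s, Aᶜ ⊆ X := by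
      intro x ⟨hx, hxs⟩
      by_contra hxX
      exact hx ⟨hxX, by simpa using hxs⟩
    refine Filter.mem_of_superset (Filter.inter_mem_inf (by simpa using hfin) ?_) hcover
    exact (Filter.biInter_finset_mem s).2 fun A hA =>
      Filter.mem_iInf_of_mem A (Filter.mem_iInf_of_mem (hs hA) (Filter.mem_principal_self _))

theorem madFilter_anti {ℬ 𝒜 : Set (Set ℕ)} (h : ℬ ⊆ 𝒜) : madFilter 𝒜 ≤ madFilter ℬ :=
  inf_le_inf_left _ (biInf_mono h)

namespace ADFamily

variable {𝒜 : Set (Set ℕ)}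

theorem exists_diff_biUnion_infinite (h𝒜 : ADFamily 𝒜) {s : Finset (Set ℕ)} (hs : ↑s ⊆ 𝒜) :
    ∃ A ∈ 𝒜, (A \ ⋃ B ∈ s, B).Infinite := by
  obtain ⟨A, hA, hAs⟩ := (h𝒜.1.sdiff s.finite_toSet).nonempty
  refine ⟨A, hA, ?_⟩
  have hfin : (A ∩ ⋃ B ∈ s, B).Finite := by
    rw [inter_iUnion₂]
    exact s.finite_toSet.biUnion fun B hB =>
      h𝒜.2.2 A hA B (hs hB) fun h => hAs (h ▸ hB)
  rw [← sdiff_self_inter]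
  exact (h𝒜.2.1 A hA).sdiff hfin

theorem univ_notMem_madIdeal (h𝒜 : ADFamily 𝒜) : univ ∉ madIdeal 𝒜 := by
  rintro ⟨s, hs, hfin⟩
  obtain ⟨A, -, hA⟩ := h𝒜.exists_diff_biUnion_infinite hs
  exact hA (hfin.subset (sdiff_subset_sdiff_left (subset_univ A)))

theorem exists_inter_infinite_of_mem_madFilter (h𝒜 : ADFamily 𝒜) {X : Set ℕ}
    (hX : X ∈ madFilter 𝒜) : ∃ A ∈ 𝒜, (X ∩ A).Infinite := by
  obtain ⟨s, hs, hfin⟩ := mem_madFilter_iff.1 hX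
  obtain ⟨A, hA, hAs⟩ := h𝒜.exists_diff_biUnion_infinite hs
  refine ⟨A, hA, fun hXA => hAs ((hXA.union hfin).subset ?_)⟩
  intro x ⟨hxA, hxs⟩
  by_cases hxX : x ∈ X
  exacts [Or.inl ⟨hxX, hxA⟩, Or.inr ⟨hxX, hxs⟩]

theorem madFamily_of_forall (h𝒜 : ADFamily 𝒜)
    (hsplit : ∀ X, X ∉ madFilter 𝒜 → X ∉ madIdeal 𝒜 → ∃ A ∈ 𝒜, (X ∩ A).Infinite) :
    MadFamily 𝒜 := by
  refine ⟨h𝒜, fun X hX => ?_⟩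
  by_cases hF : X ∈ madFilter 𝒜
  · exact h𝒜.exists_inter_infinite_of_mem_madFilter hF
  by_cases hI : X ∈ madIdeal 𝒜
  · obtain ⟨s, hs, hfin⟩ := hI
    by_contra! hfinA
    rw [← sdiff_union_inter X (⋃ A ∈ s, A), inter_iUnion₂] at hX
    exact hX (hfin.union (s.finite_toSet.biUnion fun A hA => hfinA A (hs hA)))
  exact hsplit X hF hI

end ADFamily

theorem adFamily_image {ι : Type*} {f : ι → Set ℕ} {s : Set ι} (hs : s.Infinite)
    (hinf : ∀ i ∈ s, (f i).Infinite) (had : s.Pairwise fun i j => (f i ∩ f j).Finite) :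
    InjOn f s ∧ ADFamily (f '' s) := by
  have hinj : InjOn f s := fun i hi j hj hij => by
    by_contra hne
    exact hinf i hi (by simpa [hij] using had hi hj hne)
  refine ⟨hinj, hs.image hinj, ?_, ?_⟩
  · rintro _ ⟨i, hi, rfl⟩
    exact hinf i hi
  · rintro _ ⟨i, hi, rfl⟩ _ ⟨j, hj, rfl⟩ hne
    exact had hi hj fun h => hne (h ▸ rfl)

/-- Enumerating the requirements as `j ↦ j.unpair`, pick `a j ≥ j` in `T j.unpair.1` outside
`B 0, …, B j`: then only `a 0, …, a (n - 1)` can lie in `B n`, while every `T k` receives the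
unbounded sequence `a (pair k m)`. -/
theorem exists_inter_finite_inter_infinite (B T : ℕ → Set ℕ)
    (hT : ∀ k n, (T k \ ⋃ i ≤ n, B i).Infinite) :
    ∃ A : Set ℕ, (∀ n, (A ∩ B n).Finite) ∧ ∀ k, (A ∩ T k).Infinite := by
  choose a ha hja using fun j => (hT j.unpair.1 j).exists_gt j
  refine ⟨range a, fun n => ((finite_Iio n).image a).subset ?_, fun k => ?_⟩
  · rintro _ ⟨⟨j, rfl⟩, hjn⟩
    refine ⟨j, mem_Iio.2 (not_le.1 fun hnj => (ha j).2 ?_), rfl⟩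
    exact mem_iUnion₂.2 ⟨n, hnj, hjn⟩
  · refine infinite_of_not_bddAbove fun ⟨N, hN⟩ => ?_
    have hmem : a (Nat.pair k N) ∈ range a ∩ T k :=
      ⟨mem_range_self _, by simpa using (ha (Nat.pair k N)).1⟩
    exact (hN hmem).not_gt ((Nat.right_le_pair k N).trans_lt (hja _))

theorem exists_inter_finite_inter_infinite_of_countable {ℬ 𝒯 : Set (Set ℕ)}
    (hℬ : ℬ.Countable) (hℬne : ℬ.Nonempty) (h𝒯 : 𝒯.Countable) (h𝒯ne : 𝒯.Nonempty)
    (hpos : ∀ T ∈ 𝒯, T ∉ madIdeal ℬ) :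
    ∃ A : Set ℕ, (∀ B ∈ ℬ, (A ∩ B).Finite) ∧ ∀ T ∈ 𝒯, (A ∩ T).Infinite := by
  classical
  obtain ⟨B, rfl⟩ := hℬ.exists_eq_range hℬne
  obtain ⟨T, rfl⟩ := h𝒯.exists_eq_range h𝒯ne
  have hT : ∀ k n, (T k \ ⋃ i ≤ n, B i).Infinite := fun k n hfin =>
    hpos _ (mem_range_self k) ⟨(Finset.Iic n).image B, by simp [subset_def],
      by simpa [Finset.set_biUnion_finset_image] using hfin⟩
  obtain ⟨A, hB, hT⟩ := exists_inter_finite_inter_infinite B T hT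
  exact ⟨A, forall_mem_range.2 hB, forall_mem_range.2 hT⟩

def IsADSplitter (ℬ 𝒳 : Set (Set ℕ)) (A : Set ℕ) : Prop :=
  A.Infinite ∧ (∀ B ∈ ℬ, (A ∩ B).Finite) ∧
    ∀ X ∈ 𝒳, X ∉ madFilter ℬ → X ∉ madIdeal ℬ → (A \ X).Infinite ∧ (A ∩ X).Infinite

theorem exists_isADSplitter {ℬ 𝒳 : Set (Set ℕ)} (hℬ : ADFamily ℬ) (hℬc : ℬ.Countable)
    (h𝒳 : 𝒳.Countable) : ∃ A, IsADSplitter ℬ 𝒳 A := by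
  set 𝒴 := {X ∈ 𝒳 | X ∉ madFilter ℬ ∧ X ∉ madIdeal ℬ}
  have h𝒴 : 𝒴.Countable := h𝒳.mono (sep_subset _ _)
  have hpos : ∀ T ∈ insert univ (𝒴 ∪ compl '' 𝒴), T ∉ madIdeal ℬ := by
    rintro T (rfl | hT | ⟨X, hX, rfl⟩)
    exacts [hℬ.univ_notMem_madIdeal, hT.2.2, fun h => hX.2.1 (mem_madFilter_iff.2 h)]
  obtain ⟨A, hAB, hAT⟩ := exists_inter_finite_inter_infinite_of_countable hℬc
    hℬ.1.nonempty ((h𝒴.union (h𝒴.image _)).insert _) (insert_nonempty _ _) hpos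
  refine ⟨A, by simpa using hAT univ (mem_insert _ _), hAB, fun X hX hF hI => ?_⟩
  have hX' : X ∈ 𝒴 := ⟨hX, hF, hI⟩
  exact ⟨by simpa [sdiff_eq] using hAT Xᶜ (Or.inr (Or.inr (mem_image_of_mem _ hX'))),
    hAT X (Or.inr (Or.inl hX'))⟩

def column (n : ℕ) : Set ℕ := {m | m.unpair.1 = n}

theorem column_infinite (n : ℕ) : (column n).Infinite :=
  infinite_of_injective_forall_mem (f := Nat.pair n) (fun _ _ h => (Nat.pair_eq_pair.1 h).2)
    fun m => by simp [column]

theorem column_inter_column {m n : ℕ} (h : m ≠ n) : column m ∩ column n = ∅ :=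
  eq_empty_of_forall_notMem fun _ ⟨hm, hn⟩ => h (hm.symm.trans hn)

theorem pairwise_inter_finite_of_lt {ι : Type*} [LinearOrder ι] {s : Set ι} {f : ι → Set ℕ}
    (h : ∀ α ∈ s, ∀ β < α, (f α ∩ f β).Finite) : s.Pairwise fun α β => (f α ∩ f β).Finite := by
  intro α hα β hβ hne
  rcases hne.lt_or_gt with hlt | hlt
  · rw [inter_comm]
    exact h β hβ α hlt
  · exact h α hα β hlt

theorem exists_forall_lt_of_countable {ι : Type*} [LinearOrder ι] [Uncountable ι]
    (hcount : ∀ α : ι, (Iio α).Countable) {c : Set ι} (hc : c.Countable) :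
    ∃ β, ∀ α ∈ c, α < β := by
  have hbelow : (⋃ α ∈ c, Iic α).Countable :=
    hc.biUnion fun α _ => by simpa [← Iio_insert] using (hcount α).insert α
  have hne : (⋃ α ∈ c, Iic α) ≠ univ := fun h =>
    not_countable (α := ι) (countable_univ_iff.1 (h ▸ hbelow))
  obtain ⟨β, hβ⟩ := (ne_univ_iff_exists_notMem _).1 hne
  exact ⟨β, fun α hα => not_le.1 fun h => hβ (mem_iUnion₂.2 ⟨α, hα, h⟩)⟩

section Construction

variable {ι : Type*} [LinearOrder ι] [WellFoundedLT ι]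

open scoped Classical in
/-- Starting with the columns makes the earlier sets an infinite AD family at every stage with
infinitely many predecessors, which is what a splitter needs. -/
noncomputable def madSeq (E : ι → Set ℕ) : ι → Set ℕ :=
  wellFounded_lt.fix fun α prev =>
    if (Iio α).Finite then column (Iio α).ncard
    else if h : ∃ A, IsADSplitter (range fun β : Iio α => prev β β.2) (E '' Iio α) A
      then h.choose else ∅

variable (E : ι → Set ℕ)

open scoped Classical in
theorem madSeq_eq (α : ι) : madSeq E α =
    if (Iio α).Finite then column (Iio α).ncard
    else if h : ∃ A, IsADSplitter (madSeq E '' Iio α) (E '' Iio α) A then h.choose else ∅ := by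
  rw [madSeq, WellFounded.fix_eq]
  simp only [image_eq_range]

theorem isADSplitter_madSeq (hcount : ∀ α : ι, (Iio α).Countable) {α : ι}
    (hα : (Iio α).Infinite) (hℬ : ADFamily (madSeq E '' Iio α)) :
    IsADSplitter (madSeq E '' Iio α) (E '' Iio α) (madSeq E α) := by
  have hex := exists_isADSplitter hℬ ((hcount α).image _) ((hcount α).image E)
  rw [madSeq_eq, if_neg hα, dif_pos hex]
  exact hex.choose_spec

theorem madSeq_infinite_and_inter_finite (hcount : ∀ α : ι, (Iio α).Countable) (α : ι) :
    (madSeq E α).Infinite ∧ ∀ β < α, (madSeq E α ∩ madSeq E β).Finite := by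
  induction α using WellFoundedLT.induction with
  | _ α IH =>
  by_cases hα : (Iio α).Finite
  · rw [madSeq_eq, if_pos hα]
    refine ⟨column_infinite _, fun β hβ => ?_⟩
    have hβfin : (Iio β).Finite := hα.subset (Iio_subset_Iio hβ.le)
    have hlt : (Iio β).ncard < (Iio α).ncard := ncard_lt_ncard (Iio_ssubset_Iio hβ) hα
    rw [madSeq_eq, if_pos hβfin, column_inter_column hlt.ne']
    exact finite_empty
  · have hℬ := (adFamily_image hα (fun β hβ => (IH β hβ).1)
      (pairwise_inter_finite_of_lt fun β hβ => (IH β hβ).2)).2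
    obtain ⟨hinf, hAD, -⟩ := isADSplitter_madSeq E hcount hα hℬ
    exact ⟨hinf, fun β hβ => hAD _ (mem_image_of_mem _ hβ)⟩

theorem adFamily_madSeq_image (hcount : ∀ α : ι, (Iio α).Countable) {s : Set ι}
    (hs : s.Infinite) : InjOn (madSeq E) s ∧ ADFamily (madSeq E '' s) :=
  adFamily_image hs (fun α _ => (madSeq_infinite_and_inter_finite E hcount α).1)
    (pairwise_inter_finite_of_lt fun α _ => (madSeq_infinite_and_inter_finite E hcount α).2)

theorem madSeq_eventually_splits [Uncountable ι] (hcount : ∀ α : ι, (Iio α).Countable)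
    (hE : Function.Surjective E) {X : Set ℕ} (hF : X ∉ madFilter (range (madSeq E)))
    (hI : X ∉ madIdeal (range (madSeq E))) :
    ∃ α, ∀ β, α < β → (madSeq E β \ X).Infinite ∧ (madSeq E β ∩ X).Infinite := by
  obtain ⟨γ, rfl⟩ := hE X
  obtain ⟨α, hα⟩ := exists_forall_lt_of_countable hcount
    ((countable_range (Infinite.natEmbedding ι)).insert γ)
  refine ⟨α, fun β hαβ => ?_⟩
  have hβ : (Iio β).Infinite := (infinite_range_of_injective (Infinite.natEmbedding ι).injective).mono
    fun x hx => (hα x (mem_insert_of_mem _ hx)).trans hαβ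
  exact (isADSplitter_madSeq E hcount hβ (adFamily_madSeq_image E hcount hβ).2).2.2 (E γ)
    (mem_image_of_mem _ ((hα γ (mem_insert _ _)).trans hαβ))
    (fun h => hF (madFilter_anti (image_subset_range _ _) h))
    (fun h => hI (madIdeal.mono_right (image_subset_range _ _) h))

end Construction

theorem exists_madFamily_eventually_splitting {ι : Type*} [LinearOrder ι] [WellFoundedLT ι]
    (hcount : ∀ α : ι, (Iio α).Countable) {E : ι → Set ℕ} (hE : Function.Surjective E) :
    ∃ A : ι → Set ℕ, Function.Injective A ∧ MadFamily (range A) ∧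
      ∀ X : Set ℕ, X ∉ madFilter (range A) → X ∉ madIdeal (range A) →
        ∃ α, ∀ β, α < β → (A β \ X).Infinite ∧ (A β ∩ X).Infinite := by
  have : Uncountable (Set ℕ) := ⟨fun _ => (exists_surjective_nat (Set ℕ)).elim
    fun f hf => Function.cantor_surjective f hf⟩
  have : Uncountable ι := hE.uncountable
  obtain ⟨hinj, hmad⟩ := adFamily_madSeq_image E hcount infinite_univ
  rw [image_univ] at hmad
  refine ⟨madSeq E, injOn_univ.1 hinj, hmad.madFamily_of_forall fun X hF hI => ?_,
    fun X hF hI => madSeq_eventually_splits E hcount hE hF hI⟩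
  obtain ⟨α, hα⟩ := madSeq_eventually_splits E hcount hE hF hI
  obtain ⟨β, hβ⟩ := exists_forall_lt_of_countable hcount (countable_singleton α)
  exact ⟨_, mem_range_self β, inter_comm X _ ▸ (hα β (hβ α rfl)).2⟩

universe u v

theorem countable_Iio_of_lt_ord_aleph_one (α : {o : Ordinal.{u} // o < (Cardinal.aleph 1).ord}) :
    (Iio α).Countable := by
  have h : (Iio α.1).Countable := by
    rw [← Cardinal.le_aleph0_iff_set_countable, Cardinal.mk_Iio_ordinal, Cardinal.lift_le_aleph0,
      ← Cardinal.lt_aleph_one_iff, ← Cardinal.lt_ord]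
    exact α.2
  exact h.preimage Subtype.val_injective

theorem exists_surjective_of_continuum_eq_aleph_one
    (hCH : Cardinal.continuum.{u} = Cardinal.aleph.{u} 1) :
    ∃ E : {o : Ordinal.{v} // o < (Cardinal.aleph 1).ord} → Set ℕ, Function.Surjective E := by
  obtain ⟨e⟩ : Nonempty (Set ℕ ↪ {o : Ordinal.{v} // o < (Cardinal.aleph 1).ord}) := by
    rw [← Cardinal.lift_mk_le', Cardinal.mk_set_nat, Cardinal.lift_continuum]
    have hι : Cardinal.mk {o : Ordinal.{v} // o < (Cardinal.aleph 1).ord} = Cardinal.aleph 1 :=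
      (Cardinal.mk_Iio_ordinal _).trans (by simp)
    rw [Cardinal.lift_uzero, hι]
    exact (Cardinal.lift_inj.{v + 1, u}.1 (by simpa using congrArg Cardinal.lift.{v + 1} hCH)).le
  exact ⟨Function.invFun e, Function.invFun_surjective e.injective⟩

/-- (CH) There is a mad family `𝒜 = {A_α : α < ω₁}` such that for every `X ∉ F(𝒜) ∪ I(𝒜)`
there is `α < ω₁` such that `A_β \ X` and `A_β ∩ X` are infinite for all `β > α`. -/
theorem stmt17 (hCH : Cardinal.continuum = Cardinal.aleph 1) :
    ∃ A : {o : Ordinal // o < (Cardinal.aleph 1).ord} → Set ℕ,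
      Function.Injective A ∧ MadFamily (Set.range A) ∧
      ∀ X : Set ℕ, X ∉ madFilter (Set.range A) → X ∉ madIdeal (Set.range A) →
        ∃ α : {o : Ordinal // o < (Cardinal.aleph 1).ord},
          ∀ β : {o : Ordinal // o < (Cardinal.aleph 1).ord}, α < β →
            (A β \ X).Infinite ∧ (A β ∩ X).Infinite := by
  obtain ⟨E, hE⟩ := exists_surjective_of_continuum_eq_aleph_one hCH
  exact exists_madFamily_eventually_splitting countable_Iio_of_lt_ord_aleph_one hE
end
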